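/- arXiv:2508.19640 — 4 statements merged into one kernel-verified Lean document; each statement's English description precedes it below -/
import Mathlib

section
/- Upper bound (Lemma 3.1 / Lemma B.1, Case 4): Let C_Z ≥ 1 and C_β > 0. For every n ≥ 2, every d ≥ 1, every β ∈ ℝ^d with ‖β‖₂ ≤ C_β, and every pair of neighbouring survival datasets D, D' of size n that both satisfy the covariate bound C_Z, one has ‖ℓ̇(β; D) − ℓ̇(β; D')‖₂ ≤ (4 C_Z + 6 C_Z e^{4 C_Z C_β} log(n+1)) / n. Lower bound: there exists a constant c > 0 depending only on C_Z and C_β such that for every n ≥ 2 and every d ≥ 1 there exist a pair of neighbouring survival datasets D, D' of size n satisfying the covariate bound C_Z and a vector β with ‖β‖₂ ≤ C_β for which ‖ℓ̇(β; D) − ℓ̇(β; D')‖₂ ≥ c log(n)/n. Hence the ℓ₂-sensitivity of the Cox score over such datasets is of exact order log(n)/n. -/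
/-!
Only the `i₀`-th Schoenfeld residual of neighbouring datasets differs directly; every other one
differs through `Z̄(Tᵢ)`, the center of mass of the covariates at risk with weights
`exp ⟪β, Zⱼ⟫ ∈ [e^{-C_Z C_β}, e^{C_Z C_β}]`. Changing one point and one weight of such a center
of mass moves it by at most `3 C_Z e^{2 C_Z C_β} / |R(Tᵢ)|`, and
`∑ᵢ 1 / |R(Tᵢ)| ≤ Hₙ ≤ 3/2 log (n + 1)`.
Conversely, for `β = 0`, distinct times and a single nonzero covariate `v` carried by the last
subject to fail, the score is `(1 - Hₙ) v / n`, while `Hₙ - 1 ≥ log n / 2`.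
-/
open scoped BigOperators
open MeasureTheory Real
open scoped RealInnerProductSpace
noncomputable section

structure SurvData (n d : ℕ) where
  T : Fin n → ℝ
  Δ : Fin n → Bool
  Z : Fin n → ℝ → EuclideanSpace ℝ (Fin d)

namespace SurvData

variable {n d : ℕ}

/-- Observed times lie in `[0,1]`. -/
def valid (D : SurvData n d) : Prop := ∀ i, D.T i ∈ Set.Icc (0 : ℝ) 1

/-- Covariate bound: `‖Z_i(t)‖₂ ≤ C_Z` for all `i` and all `t ∈ [0,1]`. -/
def covBound (D : SurvData n d) (CZ : ℝ) : Prop :=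
  ∀ i, ∀ t ∈ Set.Icc (0 : ℝ) 1, ‖D.Z i t‖ ≤ CZ

def S0 (D : SurvData n d) (β : EuclideanSpace ℝ (Fin d)) (t : ℝ) : ℝ :=
  (n : ℝ)⁻¹ * ∑ j, if t ≤ D.T j then Real.exp ⟪β, D.Z j t⟫ else 0

def S1 (D : SurvData n d) (β : EuclideanSpace ℝ (Fin d)) (t : ℝ) :
    EuclideanSpace ℝ (Fin d) :=
  (n : ℝ)⁻¹ • ∑ j, if t ≤ D.T j then Real.exp ⟪β, D.Z j t⟫ • D.Z j t else 0

def Zbar (D : SurvData n d) (β : EuclideanSpace ℝ (Fin d)) (t : ℝ) :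
    EuclideanSpace ℝ (Fin d) :=
  (D.S0 β t)⁻¹ • D.S1 β t

/-- The Cox partial-likelihood score `ℓ̇(β; D)`. -/
def score (D : SurvData n d) (β : EuclideanSpace ℝ (Fin d)) :
    EuclideanSpace ℝ (Fin d) :=
  (n : ℝ)⁻¹ • ∑ i, if D.Δ i then D.Z i (D.T i) - D.Zbar β (D.T i) else 0

/-- Neighbouring datasets: they differ in at most one triple. -/
def Neighbor (D D' : SurvData n d) : Prop :=
  ∃ i0 : Fin n, ∀ i, i ≠ i0 → D.T i = D'.T i ∧ D.Δ i = D'.Δ i ∧ D.Z i = D'.Z i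

end SurvData

open Finset

namespace Real

lemma inv_add_one_le_log_add_one_sub_log {x : ℝ} (hx : 0 < x) :
    (x + 1)⁻¹ ≤ log (x + 1) - log x := by
  have h := one_sub_inv_le_log_of_pos (show 0 < (x + 1) / x by positivity)
  rw [log_div (by positivity) hx.ne', inv_div] at h
  convert h using 1
  field_simp
  ring

lemma log_add_one_sub_log_le_inv {x : ℝ} (hx : 0 < x) :
    log (x + 1) - log x ≤ x⁻¹ := by
  have h := log_le_sub_one_of_pos (show 0 < (x + 1) / x by positivity)
  rw [log_div (by positivity) hx.ne'] at h
  convert h using 1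
  field_simp
  ring

end Real

lemma harmonic_le_three_halves_mul_log (n : ℕ) : (harmonic n : ℝ) ≤ 3 / 2 * log (n + 1) := by
  induction n with
  | zero => simp
  | succ n ih =>
    suffices ((n : ℝ) + 1)⁻¹ ≤ 3 / 2 * (log (n + 1 + 1) - log (n + 1)) by
      push_cast [harmonic_succ]
      linarith
    rcases n.eq_zero_or_pos with rfl | hn
    · norm_num
      linarith [log_two_gt_d9]
    have hn : (1 : ℝ) ≤ n := by exact_mod_cast hn
    calc ((n : ℝ) + 1)⁻¹ ≤ 3 / 2 * ((n : ℝ) + 1 + 1)⁻¹ := by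
          rw [← div_eq_mul_inv, inv_eq_one_div, div_le_div_iff₀ (by positivity) (by positivity)]
          linarith
      _ ≤ 3 / 2 * (log (n + 1 + 1) - log (n + 1)) := by
          gcongr
          exact inv_add_one_le_log_add_one_sub_log (by positivity)

lemma log_le_two_mul_harmonic_sub_one {n : ℕ} (hn : n ≠ 0) :
    log n ≤ 2 * ((harmonic n : ℝ) - 1) := by
  induction n with
  | zero => contradiction
  | succ n ih =>
    rcases n.eq_zero_or_pos with rfl | hn
    · simp
    have hn : (1 : ℝ) ≤ n := by exact_mod_cast hn
    have hstep := log_add_one_sub_log_le_inv (x := (n : ℝ)) (by positivity)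
    have hinv : (n : ℝ)⁻¹ ≤ 2 * ((n : ℝ) + 1)⁻¹ := by
      rw [← div_eq_mul_inv, inv_eq_one_div, div_le_div_iff₀ (by positivity) (by positivity)]
      linarith
    push_cast [harmonic_succ]
    linarith [ih (by omega)]

/-- Sorting the times, the `k`-th smallest one has at least `n - k` times above it. -/
lemma sum_inv_card_le_harmonic {α : Type*} [LinearOrder α] {n : ℕ} (T : Fin n → α) :
    ∑ i, (#{j | T i ≤ T j} : ℝ)⁻¹ ≤ harmonic n := by
  set σ := Tuple.sort T
  have hcard (k : Fin n) : n - k ≤ #{j | T (σ k) ≤ T j} := by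
    calc n - k = #((Ici k).map σ.toEmbedding) := by simp
      _ ≤ _ := card_le_card fun j hj => by
        obtain ⟨l, hl, rfl⟩ := mem_map.mp hj
        simpa using Tuple.monotone_sort T (mem_Ici.mp hl)
  calc ∑ i, (#{j | T i ≤ T j} : ℝ)⁻¹ = ∑ k, (#{j | T (σ k) ≤ T j} : ℝ)⁻¹ :=
        (Equiv.sum_comp σ _).symm
    _ ≤ ∑ k : Fin n, ((n - k : ℕ) : ℝ)⁻¹ := by
        gcongr with k
        · exact Nat.cast_pos.mpr (Nat.sub_pos_of_lt k.isLt)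
        · exact hcard k
    _ = ∑ k ∈ range n, ((n - 1 - k + 1 : ℕ) : ℝ)⁻¹ := by
        rw [Fin.sum_univ_eq_sum_range (fun k => ((n - k : ℕ) : ℝ)⁻¹)]
        exact sum_congr rfl fun k hk => by rw [mem_range] at hk; congr 3; omega
    _ = harmonic n := by
        rw [sum_range_reflect (fun k => ((k + 1 : ℕ) : ℝ)⁻¹)]
        simp [harmonic]

lemma abs_real_inner_le_of_norm_le {F : Type*} [NormedAddCommGroup F] [InnerProductSpace ℝ F]
    {x y : F} {a b : ℝ} (hx : ‖x‖ ≤ a) (hy : ‖y‖ ≤ b) : |⟪x, y⟫| ≤ a * b :=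
  (abs_real_inner_le_norm x y).trans (mul_le_mul hx hy (norm_nonneg y) ((norm_nonneg x).trans hx))

section CenterMass

variable {ι E : Type*} [Fintype ι] [NormedAddCommGroup E] [NormedSpace ℝ E]

lemma Fintype.sum_sub_sum_of_forall_ne {M : Type*} [AddCommGroup M] {f g : ι → M} {i₀ : ι}
    (h : ∀ i ≠ i₀, f i = g i) : ∑ i, f i - ∑ i, g i = f i₀ - g i₀ := by
  rw [← sum_sub_distrib, Fintype.sum_eq_single i₀ fun i hi => by rw [h i hi, sub_self]]

lemma norm_sum_smul_le {w : ι → ℝ} {z : ι → E} {C : ℝ} (hw : ∀ i, 0 ≤ w i)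
    (hz : ∀ i, ‖z i‖ ≤ C) : ‖∑ i, w i • z i‖ ≤ C * ∑ i, w i := by
  rw [mul_sum]
  refine (norm_sum_le _ _).trans (sum_le_sum fun i _ => ?_)
  rw [norm_smul, Real.norm_of_nonneg (hw i), mul_comm]
  exact mul_le_mul_of_nonneg_right (hz i) (hw i)

lemma norm_centerMass_le {w : ι → ℝ} {z : ι → E} {C : ℝ} (hw : ∀ i, 0 ≤ w i)
    (hpos : 0 < ∑ i, w i) (hz : ∀ i, ‖z i‖ ≤ C) : ‖univ.centerMass w z‖ ≤ C := by
  simpa using (convex_closedBall (0 : E) C).centerMass_mem (fun i _ => hw i) hpos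
    (fun i _ => by simpa using hz i)

lemma norm_inv_smul_sub_inv_smul_le {a a' C : ℝ} {b b' : E} (ha : 0 < a) (ha' : 0 < a')
    (hb' : ‖b'‖ ≤ C * a') : ‖a⁻¹ • b - a'⁻¹ • b'‖ ≤ (‖b - b'‖ + C * |a - a'|) / a := by
  have hsplit : a⁻¹ • b - a'⁻¹ • b' = a⁻¹ • (b - b') + ((a' - a) / (a * a')) • b' := by
    rw [sub_div, div_mul_cancel_left₀ ha.ne', div_mul_cancel_right₀ ha'.ne']
    module
  rw [hsplit]
  refine (norm_add_le _ _).trans ?_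
  rw [norm_smul, norm_smul, Real.norm_of_nonneg (by positivity), Real.norm_eq_abs, abs_div,
    abs_of_pos (mul_pos ha ha'), abs_sub_comm, add_div, inv_mul_eq_div]
  gcongr
  calc |a - a'| / (a * a') * ‖b'‖ ≤ |a - a'| / (a * a') * (C * a') := by gcongr
    _ = C * |a - a'| / a := by field_simp

lemma norm_centerMass_sub_centerMass_le {w w' : ι → ℝ} {z z' : ι → E} {C M : ℝ} {i₀ : ι}
    (hw : ∀ i, 0 ≤ w i) (hw' : ∀ i, 0 ≤ w' i) (hz : ∀ i, ‖z i‖ ≤ C) (hz' : ∀ i, ‖z' i‖ ≤ C)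
    (hM : w i₀ ≤ M) (hM' : w' i₀ ≤ M) (heq : ∀ i ≠ i₀, w i = w' i ∧ z i = z' i)
    (hpos : 0 < ∑ i, w i) (hpos' : 0 < ∑ i, w' i) :
    ‖univ.centerMass w z - univ.centerMass w' z'‖ ≤ 3 * C * M / ∑ i, w i := by
  have hC : 0 ≤ C := (norm_nonneg _).trans (hz i₀)
  have hsum : |∑ i, w i - ∑ i, w' i| ≤ M := by
    rw [Fintype.sum_sub_sum_of_forall_ne fun i hi => (heq i hi).1]
    exact abs_sub_le_of_nonneg_of_le (hw i₀) hM (hw' i₀) hM'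
  have hsmul : ‖∑ i, w i • z i - ∑ i, w' i • z' i‖ ≤ 2 * C * M := by
    rw [Fintype.sum_sub_sum_of_forall_ne fun i hi => by rw [(heq i hi).1, (heq i hi).2]]
    refine (norm_sub_le _ _).trans ?_
    rw [norm_smul, norm_smul, Real.norm_of_nonneg (hw i₀), Real.norm_of_nonneg (hw' i₀)]
    nlinarith [hz i₀, hz' i₀, hw i₀, hw' i₀, norm_nonneg (z i₀), norm_nonneg (z' i₀)]
  calc _ ≤ (‖∑ i, w i • z i - ∑ i, w' i • z' i‖ + C * |∑ i, w i - ∑ i, w' i|) / ∑ i, w i :=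
        norm_inv_smul_sub_inv_smul_le hpos hpos' (norm_sum_smul_le hw' hz')
    _ ≤ (2 * C * M + C * M) / ∑ i, w i := by gcongr
    _ = 3 * C * M / ∑ i, w i := by ring

end CenterMass

namespace SurvData

variable {n d : ℕ} {CZ Cβ : ℝ} {β : EuclideanSpace ℝ (Fin d)} {t : ℝ}

def atRisk (D : SurvData n d) (t : ℝ) : Finset (Fin n) := {j | t ≤ D.T j}

lemma mem_atRisk {D : SurvData n d} {j : Fin n} : j ∈ D.atRisk t ↔ t ≤ D.T j := by
  simp [atRisk]

def riskWeight (D : SurvData n d) (β : EuclideanSpace ℝ (Fin d)) (t : ℝ) (j : Fin n) : ℝ :=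
  if t ≤ D.T j then exp ⟪β, D.Z j t⟫ else 0

def schoenfeldResidual (D : SurvData n d) (β : EuclideanSpace ℝ (Fin d)) (i : Fin n) :
    EuclideanSpace ℝ (Fin d) :=
  if D.Δ i then D.Z i (D.T i) - D.Zbar β (D.T i) else 0

lemma score_eq_smul_sum_schoenfeldResidual (D : SurvData n d) (β : EuclideanSpace ℝ (Fin d)) :
    D.score β = (n : ℝ)⁻¹ • ∑ i, D.schoenfeldResidual β i :=
  rfl

lemma Zbar_eq_centerMass (D : SurvData n d) (β : EuclideanSpace ℝ (Fin d)) (t : ℝ) :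
    D.Zbar β t = univ.centerMass (D.riskWeight β t) (fun j => D.Z j t) := by
  rcases n.eq_zero_or_pos with rfl | hn
  · simp [Zbar, S1, centerMass]
  simp only [Zbar, S0, S1, centerMass, riskWeight, ite_smul, zero_smul, mul_inv, smul_smul]
  congr 1
  field_simp

lemma riskWeight_nonneg (D : SurvData n d) (β : EuclideanSpace ℝ (Fin d)) (t : ℝ) (j : Fin n) :
    0 ≤ D.riskWeight β t j := by
  unfold riskWeight
  split_ifs <;> positivity

lemma riskWeight_le {D : SurvData n d} {j : Fin n} (hβ : ‖β‖ ≤ Cβ) (hZ : ‖D.Z j t‖ ≤ CZ) :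
    D.riskWeight β t j ≤ exp (CZ * Cβ) := by
  unfold riskWeight
  split_ifs
  · exact exp_le_exp.mpr (abs_le.mp (real_inner_comm β _ ▸ abs_real_inner_le_of_norm_le hZ hβ)).2
  · positivity

lemma exp_neg_mul_card_atRisk_le_sum_riskWeight {D : SurvData n d} (hβ : ‖β‖ ≤ Cβ)
    (hZ : ∀ j, ‖D.Z j t‖ ≤ CZ) :
    exp (-(CZ * Cβ)) * #(D.atRisk t) ≤ ∑ j, D.riskWeight β t j := by
  simp only [riskWeight]
  rw [← sum_filter, mul_comm, ← nsmul_eq_mul]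
  exact card_nsmul_le_sum _ _ _ fun j _ =>
    exp_le_exp.mpr (neg_le_of_abs_le (real_inner_comm β _ ▸ abs_real_inner_le_of_norm_le (hZ j) hβ))

lemma sum_riskWeight_pos {D : SurvData n d} (hR : (D.atRisk t).Nonempty) :
    0 < ∑ j, D.riskWeight β t j := by
  obtain ⟨j, hj⟩ := hR
  refine sum_pos' (fun j _ => D.riskWeight_nonneg β t j) ⟨j, mem_univ j, ?_⟩
  rw [riskWeight, if_pos (mem_atRisk.mp hj)]
  positivity

lemma mem_atRisk_self (D : SurvData n d) (i : Fin n) : i ∈ D.atRisk (D.T i) :=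
  mem_atRisk.mpr le_rfl

lemma norm_Zbar_le {D : SurvData n d} (hZ : ∀ j, ‖D.Z j t‖ ≤ CZ) (hR : (D.atRisk t).Nonempty) :
    ‖D.Zbar β t‖ ≤ CZ := by
  rw [Zbar_eq_centerMass]
  exact norm_centerMass_le (D.riskWeight_nonneg β t) (sum_riskWeight_pos hR) hZ

lemma norm_Zbar_sub_Zbar_le {D D' : SurvData n d} {i₀ : Fin n}
    (hDD' : ∀ i ≠ i₀, D.T i = D'.T i ∧ D.Δ i = D'.Δ i ∧ D.Z i = D'.Z i) (hβ : ‖β‖ ≤ Cβ)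
    (hZ : ∀ j, ‖D.Z j t‖ ≤ CZ) (hZ' : ∀ j, ‖D'.Z j t‖ ≤ CZ)
    (hR : (D.atRisk t).Nonempty) (hR' : (D'.atRisk t).Nonempty) :
    ‖D.Zbar β t - D'.Zbar β t‖ ≤ 3 * CZ * exp (2 * CZ * Cβ) / #(D.atRisk t) := by
  have hCZ : 0 ≤ CZ := (norm_nonneg _).trans (hZ i₀)
  have hN : (0 : ℝ) < #(D.atRisk t) := by exact_mod_cast hR.card_pos
  rw [Zbar_eq_centerMass, Zbar_eq_centerMass]
  refine (norm_centerMass_sub_centerMass_le (D.riskWeight_nonneg β t)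
    (D'.riskWeight_nonneg β t) hZ hZ' (riskWeight_le hβ (hZ i₀)) (riskWeight_le hβ (hZ' i₀))
    (fun i hi => ?_) (sum_riskWeight_pos hR) (sum_riskWeight_pos hR')).trans ?_
  · obtain ⟨hT, -, hZi⟩ := hDD' i hi
    simp [riskWeight, hT, hZi]
  calc 3 * CZ * exp (CZ * Cβ) / ∑ j, D.riskWeight β t j
      ≤ 3 * CZ * exp (CZ * Cβ) / (exp (-(CZ * Cβ)) * #(D.atRisk t)) := by
        gcongr
        exact exp_neg_mul_card_atRisk_le_sum_riskWeight hβ hZ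
    _ = 3 * CZ * exp (2 * CZ * Cβ) / #(D.atRisk t) := by
        rw [exp_neg, mul_assoc 2, two_mul, exp_add]
        field_simp

lemma norm_schoenfeldResidual_le {D : SurvData n d} (hv : D.valid) (hZ : D.covBound CZ)
    (i : Fin n) : ‖D.schoenfeldResidual β i‖ ≤ 2 * CZ := by
  have hZi : ‖D.Z i (D.T i)‖ ≤ CZ := hZ i _ (hv i)
  unfold schoenfeldResidual
  split_ifs
  · refine (norm_sub_le _ _).trans ?_
    linarith [norm_Zbar_le (β := β) (fun j => hZ j _ (hv i)) ⟨i, D.mem_atRisk_self i⟩]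
  · simpa using (norm_nonneg _).trans hZi

lemma norm_schoenfeldResidual_sub_le {D D' : SurvData n d} {i₀ i : Fin n}
    (hDD' : ∀ i ≠ i₀, D.T i = D'.T i ∧ D.Δ i = D'.Δ i ∧ D.Z i = D'.Z i) (hβ : ‖β‖ ≤ Cβ)
    (hv : D.valid) (hZ : D.covBound CZ) (hZ' : D'.covBound CZ) (hi : i ≠ i₀) :
    ‖D.schoenfeldResidual β i - D'.schoenfeldResidual β i‖ ≤
      3 * CZ * exp (2 * CZ * Cβ) / #(D.atRisk (D.T i)) := by
  obtain ⟨hT, hΔ, hZi⟩ := hDD' i hi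
  have hR' : (D'.atRisk (D.T i)).Nonempty := ⟨i, hT ▸ D'.mem_atRisk_self i⟩
  have hbound := norm_Zbar_sub_Zbar_le hDD' hβ (fun j => hZ j _ (hv i))
    (fun j => hZ' j _ (hv i)) ⟨i, D.mem_atRisk_self i⟩ hR'
  unfold schoenfeldResidual
  rw [← hT, ← hΔ, ← hZi]
  split_ifs
  · rwa [sub_sub_sub_cancel_left, norm_sub_rev]
  · simpa using (norm_nonneg _).trans hbound

theorem norm_score_sub_score_le {D D' : SurvData n d} (hβ : ‖β‖ ≤ Cβ) (hv : D.valid)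
    (hv' : D'.valid) (hZ : D.covBound CZ) (hZ' : D'.covBound CZ) (hDD' : Neighbor D D') :
    ‖D.score β - D'.score β‖ ≤ (4 * CZ + 3 * CZ * exp (2 * CZ * Cβ) * harmonic n) / n := by
  obtain ⟨i₀, hi₀⟩ := hDD'
  set K := 3 * CZ * exp (2 * CZ * Cβ)
  have hterm (i : Fin n) : ‖D.schoenfeldResidual β i - D'.schoenfeldResidual β i‖ ≤
      (if i = i₀ then 4 * CZ else 0) + K * (#(D.atRisk (D.T i)) : ℝ)⁻¹ := by
    split_ifs with h
    · have hK : 0 ≤ K * (#(D.atRisk (D.T i)) : ℝ)⁻¹ := by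
        have := (norm_nonneg _).trans (hZ i _ (hv i)); positivity
      linarith [norm_sub_le (D.schoenfeldResidual β i) (D'.schoenfeldResidual β i),
        norm_schoenfeldResidual_le (β := β) hv hZ i, norm_schoenfeldResidual_le (β := β) hv' hZ' i]
    · rw [zero_add, ← div_eq_mul_inv]
      exact norm_schoenfeldResidual_sub_le hi₀ hβ hv hZ hZ' h
  rw [score_eq_smul_sum_schoenfeldResidual, score_eq_smul_sum_schoenfeldResidual, ← smul_sub,
    ← sum_sub_distrib, norm_smul, norm_inv, RCLike.norm_natCast, div_eq_inv_mul]
  gcongr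
  calc ‖∑ i, (D.schoenfeldResidual β i - D'.schoenfeldResidual β i)‖
      ≤ ∑ i, ((if i = i₀ then 4 * CZ else 0) + K * (#(D.atRisk (D.T i)) : ℝ)⁻¹) :=
        (norm_sum_le _ _).trans (sum_le_sum fun i _ => hterm i)
    _ = 4 * CZ + K * ∑ i, (#(D.atRisk (D.T i)) : ℝ)⁻¹ := by
        rw [sum_add_distrib, sum_ite_eq', if_pos (mem_univ _), mul_sum]
    _ ≤ 4 * CZ + K * harmonic n := by
        have := (norm_nonneg _).trans (hZ i₀ _ (hv i₀))
        gcongr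
        exact sum_inv_card_le_harmonic D.T

lemma sum_riskWeight_zero (D : SurvData n d) (t : ℝ) :
    ∑ j, D.riskWeight 0 t j = #(D.atRisk t) := by
  simp [riskWeight, atRisk]

section Spike

variable [NeZero n]

/-- All covariates vanish except `Z₀ ≡ v`, and the times `Tᵢ = 1 - i / n` are strictly decreasing,
so the risk set at `Tᵢ` is `{0, …, i}` and the residuals add up to `(1 - Hₙ) v`. -/
def spike (v : EuclideanSpace ℝ (Fin d)) : SurvData n d where
  T i := 1 - i / n
  Δ _ := true
  Z i _ := if i = 0 then v else 0

lemma spike_valid (v : EuclideanSpace ℝ (Fin d)) : (spike v : SurvData n d).valid := by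
  intro i
  have hi : (i : ℝ) / n ≤ 1 := div_le_one_of_le₀ (by exact_mod_cast i.isLt.le) (Nat.cast_nonneg n)
  constructor <;> simp only [spike] <;> linarith [show 0 ≤ (i : ℝ) / n by positivity]

lemma spike_covBound {v : EuclideanSpace ℝ (Fin d)} (hv : ‖v‖ ≤ CZ) :
    (spike v : SurvData n d).covBound CZ := by
  intro i t _
  simp only [spike]
  split_ifs
  · exact hv
  · simpa using (norm_nonneg v).trans hv

lemma spike_neighbor (v w : EuclideanSpace ℝ (Fin d)) :
    Neighbor (spike v : SurvData n d) (spike w) :=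
  ⟨0, fun i hi => ⟨rfl, rfl, by simp [spike, hi]⟩⟩

lemma atRisk_spike (v : EuclideanSpace ℝ (Fin d)) (i : Fin n) :
    (spike v : SurvData n d).atRisk ((spike v : SurvData n d).T i) = Iic i := by
  have hn : (0 : ℝ) < n := by exact_mod_cast Nat.pos_of_neZero n
  refine Finset.ext fun j => ?_
  rw [mem_atRisk, mem_Iic]
  simp only [spike]
  rw [sub_le_sub_iff_left, div_le_div_iff_of_pos_right hn, Nat.cast_le, Fin.le_iff_val_le_val]

lemma Zbar_spike (v : EuclideanSpace ℝ (Fin d)) (i : Fin n) :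
    (spike v : SurvData n d).Zbar 0 ((spike v : SurvData n d).T i) = ((i : ℝ) + 1)⁻¹ • v := by
  rw [Zbar_eq_centerMass, centerMass, sum_riskWeight_zero, atRisk_spike, Fin.card_Iic,
    Fintype.sum_eq_single 0 fun j hj => by simp [spike, hj]]
  have h0 : (spike v : SurvData n d).T i ≤ (spike v : SurvData n d).T 0 := by
    rw [← mem_atRisk, atRisk_spike]
    exact mem_Iic.mpr (Fin.zero_le i)
  rw [riskWeight, if_pos h0]
  simp [spike]

lemma score_spike (v : EuclideanSpace ℝ (Fin d)) :
    (spike v : SurvData n d).score 0 = ((n : ℝ)⁻¹ * (1 - harmonic n)) • v := by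
  rw [score_eq_smul_sum_schoenfeldResidual, mul_smul]
  congr 1
  simp only [schoenfeldResidual, Zbar_spike]
  simp only [spike, if_true, sum_sub_distrib, sum_ite_eq', mem_univ, ← sum_smul]
  rw [Fin.sum_univ_eq_sum_range (fun k => ((k : ℝ) + 1)⁻¹), sub_smul, one_smul]
  push_cast [harmonic]
  rfl

lemma norm_score_spike_zero_sub_score_spike (v : EuclideanSpace ℝ (Fin d)) :
    ‖(spike 0 : SurvData n d).score 0 - (spike v : SurvData n d).score 0‖ =
      (harmonic n - 1) * ‖v‖ / n := by
  have hH := log_le_two_mul_harmonic_sub_one (NeZero.ne n)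
  have hlog := log_natCast_nonneg n
  rw [score_spike, score_spike, smul_zero, zero_sub, norm_neg, norm_smul, norm_mul, norm_inv,
    RCLike.norm_natCast, Real.norm_eq_abs, abs_of_nonpos (by linarith)]
  ring

end Spike

end SurvData

/-- Lemma 3.1 / Lemma B.1 (Case 4): the ℓ₂-sensitivity of the Cox partial-likelihood
score over neighbouring survival datasets with covariate bound `C_Z` and coefficient
bound `C_β` is of exact order `log n / n`: the upper bound
`(4 C_Z + 6 C_Z e^{4 C_Z C_β} log(n+1))/n` always holds, and there is a constant
`c > 0` (depending only on `C_Z, C_β`) such that a pair of neighbouring datasets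
attains `c log n / n`. -/
theorem cox_score_sensitivity (CZ Cβ : ℝ) (hCZ : 1 ≤ CZ) (hCβ : 0 < Cβ) :
    (∀ (n d : ℕ), 2 ≤ n → 1 ≤ d → ∀ β : EuclideanSpace ℝ (Fin d), ‖β‖ ≤ Cβ →
      ∀ D D' : SurvData n d, D.valid → D'.valid → D.covBound CZ → D'.covBound CZ →
        SurvData.Neighbor D D' →
        ‖D.score β - D'.score β‖ ≤
          (4 * CZ + 6 * CZ * Real.exp (4 * CZ * Cβ) * Real.log (n + 1)) / n) ∧
    (∃ c : ℝ, 0 < c ∧ ∀ (n d : ℕ), 2 ≤ n → 1 ≤ d →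
      ∃ (β : EuclideanSpace ℝ (Fin d)) (D D' : SurvData n d),
        ‖β‖ ≤ Cβ ∧ D.valid ∧ D'.valid ∧ D.covBound CZ ∧ D'.covBound CZ ∧
        SurvData.Neighbor D D' ∧
        c * Real.log n / n ≤ ‖D.score β - D'.score β‖) := by
  refine ⟨fun n d _ _ β hβ D D' hv hv' hZ hZ' hDD' => ?_, 1 / 2, by norm_num, fun n d hn hd => ?_⟩
  · refine (SurvData.norm_score_sub_score_le hβ hv hv' hZ hZ' hDD').trans ?_
    have hexp : exp (2 * CZ * Cβ) ≤ exp (4 * CZ * Cβ) := exp_le_exp.mpr (by nlinarith)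
    have hlog : 0 ≤ log ((n : ℝ) + 1) := log_nonneg (by linarith [n.cast_nonneg (α := ℝ)])
    gcongr (4 * CZ + ?_) / _
    calc 3 * CZ * exp (2 * CZ * Cβ) * harmonic n
        ≤ 3 * CZ * exp (2 * CZ * Cβ) * (3 / 2 * log (n + 1)) := by
          gcongr
          exact harmonic_le_three_halves_mul_log n
      _ ≤ 3 * CZ * exp (4 * CZ * Cβ) * (3 / 2 * log (n + 1)) := by gcongr
      _ ≤ 6 * CZ * exp (4 * CZ * Cβ) * log (n + 1) := by
          have : 0 ≤ CZ * exp (4 * CZ * Cβ) * log (n + 1) := by positivity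
          linarith
  · have : NeZero n := ⟨by omega⟩
    set v := EuclideanSpace.single (⟨0, hd⟩ : Fin d) CZ
    have hv : ‖v‖ = CZ := by simp [v, abs_of_pos (by linarith : (0 : ℝ) < CZ)]
    refine ⟨0, SurvData.spike 0, SurvData.spike v, by simpa using hCβ.le,
      SurvData.spike_valid 0, SurvData.spike_valid v,
      SurvData.spike_covBound (by rw [norm_zero]; linarith), SurvData.spike_covBound hv.le,
      SurvData.spike_neighbor 0 v, ?_⟩
    rw [SurvData.norm_score_spike_zero_sub_score_spike, hv]
    gcongr ?_ / _
    nlinarith [log_le_two_mul_harmonic_sub_one (n := n) (by omega), log_natCast_nonneg n]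
end
end

section
/- Covariate-neighbouring sensitivity (Lemma B.1, Case 2): Let C_Z ≥ 1 and C_β > 0. For every n ≥ 2, every d ≥ 1, every β ∈ ℝ^d with ‖β‖₂ ≤ C_β, and every pair of survival datasets D, D' of size n that satisfy the covariate bound C_Z and agree in all observed times and all censoring indicators while differing in at most one covariate path, one has ‖ℓ̇(β; D) − ℓ̇(β; D')‖₂ ≤ (4 C_Z + 6 C_Z e^{4 C_Z C_β} log(n+1)) / n. Moreover, there exists a constant c > 0 depending only on C_Z and C_β such that for every n ≥ 2 and every d ≥ 1 there exist such a pair of datasets and a β with ‖β‖₂ ≤ C_β for which ‖ℓ̇(β; D) − ℓ̇(β; D')‖₂ ≥ c log(n)/n. Hence this sensitivity is of exact order log(n)/n. -/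
open scoped BigOperators
open MeasureTheory Real
open scoped RealInnerProductSpace
noncomputable section

/-- Covariate-neighbouring datasets: same times and censoring indicators, and at
most one covariate path differs. -/
def SurvData.CovNeighbor {n d : ℕ} (D D' : SurvData n d) : Prop :=
  D.T = D'.T ∧ D.Δ = D'.Δ ∧ ∃ i0 : Fin n, ∀ i, i ≠ i0 → D.Z i = D'.Z i

section Aux
open Finset


lemma aux_harmonicR (n : ℕ) :
    ∑ k ∈ range n, ((k : ℝ) + 1)⁻¹ = (harmonic n : ℝ) := by
  simp [harmonic]

lemma aux_sum_inv_risk_le {n : ℕ} (T : Fin n → ℝ) :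
    ∑ i, ((univ.filter fun j => T i ≤ T j).card : ℝ)⁻¹ ≤ ∑ k ∈ range n, ((k : ℝ) + 1)⁻¹ := by
  classical
  set σ := Tuple.sort T with hσ
  have hmono := Tuple.monotone_sort T
  have hre : ∑ i, ((univ.filter fun j => T i ≤ T j).card : ℝ)⁻¹
      = ∑ k, ((univ.filter fun j => T (σ k) ≤ T j).card : ℝ)⁻¹ := by
    rw [← Equiv.sum_comp σ (fun i => ((univ.filter fun j => T i ≤ T j).card : ℝ)⁻¹)]
  rw [hre]
  have key : ∀ k : Fin n, (n - (k : ℕ)) ≤ (univ.filter fun j => T (σ k) ≤ T j).card := by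
    intro k
    have hsub : (Ici k).image σ ⊆ univ.filter fun j => T (σ k) ≤ T j := by
      intro x hx
      simp only [mem_image, mem_Ici] at hx
      obtain ⟨l, hl, rfl⟩ := hx
      simp only [mem_filter, mem_univ, true_and]
      exact hmono hl
    calc n - (k : ℕ) = (Ici k).card := (Fin.card_Ici k).symm
      _ = ((Ici k).image σ).card := (card_image_of_injective _ σ.injective).symm
      _ ≤ _ := card_le_card hsub
  have step : ∀ k : Fin n, ((univ.filter fun j => T (σ k) ≤ T j).card : ℝ)⁻¹
      ≤ ((n : ℝ) - (k : ℕ))⁻¹ := by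
    intro k
    have hk : (k : ℕ) < n := k.isLt
    have hpos : (0 : ℝ) < (n : ℝ) - (k : ℕ) := sub_pos.mpr (by exact_mod_cast hk)
    apply inv_anti₀ hpos
    have h1 : ((n : ℝ) - (k : ℕ)) = ((n - (k : ℕ) : ℕ) : ℝ) := by
      push_cast [Nat.cast_sub hk.le]; ring
    rw [h1]
    exact_mod_cast key k
  calc ∑ k, ((univ.filter fun j => T (σ k) ≤ T j).card : ℝ)⁻¹
      ≤ ∑ k : Fin n, ((n : ℝ) - (k : ℕ))⁻¹ := Finset.sum_le_sum fun k _ => step k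
    _ = ∑ k ∈ range n, ((n : ℝ) - k)⁻¹ := Fin.sum_univ_eq_sum_range (fun k => ((n : ℝ) - k)⁻¹) n
    _ = ∑ k ∈ range n, ((k : ℝ) + 1)⁻¹ := by
        rw [← Finset.sum_range_reflect]
        apply Finset.sum_congr rfl
        intro j hj
        rw [mem_range] at hj
        congr 1
        have h1 : n - 1 - j = n - (j + 1) := by omega
        rw [h1, Nat.cast_sub (by omega)]
        push_cast; ring

lemma aux_one_le_log (n : ℕ) (hn : 2 ≤ n) : 1 ≤ Real.log (n + 1) := by
  have h3 : (3 : ℝ) ≤ (n : ℝ) + 1 := by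
    have : (2 : ℝ) ≤ (n : ℝ) := by exact_mod_cast hn
    linarith
  have he : Real.exp 1 ≤ (n : ℝ) + 1 :=
    le_trans (le_of_lt (lt_trans Real.exp_one_lt_d9 (by norm_num))) h3
  calc (1 : ℝ) = Real.log (Real.exp 1) := (Real.log_exp 1).symm
    _ ≤ Real.log ((n : ℝ) + 1) := Real.log_le_log (Real.exp_pos 1) he

lemma aux_H_upper (n : ℕ) (hn : 2 ≤ n) :
    ∑ k ∈ range n, ((k : ℝ) + 1)⁻¹ ≤ 2 * Real.log (n + 1) := by
  have h1 : ∑ k ∈ range n, ((k : ℝ) + 1)⁻¹ = (harmonic n : ℝ) := by simp [harmonic]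
  have h2 := harmonic_le_one_add_log n
  have hn2 : (2:ℝ) ≤ (n:ℝ) := by exact_mod_cast hn
  have h3 : Real.log n ≤ Real.log (n + 1) :=
    Real.log_le_log (by linarith) (by linarith)
  have h4 := aux_one_le_log n hn
  rw [h1]; linarith

lemma aux_telescope (m : ℕ) :
    Real.log (m + 2) - Real.log 2 ≤ ∑ k ∈ range m, ((k : ℝ) + 2)⁻¹ := by
  induction m with
  | zero => simp
  | succ m ih =>
    rw [Finset.sum_range_succ]
    have hstep : Real.log ((m : ℝ) + 1 + 2) - Real.log ((m : ℝ) + 2) ≤ ((m : ℝ) + 2)⁻¹ := by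
      have hpos : (0 : ℝ) < (m : ℝ) + 2 := by positivity
      rw [← Real.log_div (by positivity) (by positivity)]
      have h := Real.log_le_sub_one_of_pos (show (0:ℝ) < ((m : ℝ) + 3) / ((m : ℝ) + 2) by positivity)
      have heq : ((m : ℝ) + 3) / ((m : ℝ) + 2) - 1 = ((m : ℝ) + 2)⁻¹ := by
        rw [div_sub_one (by positivity), inv_eq_one_div]
        norm_num
      have h4 : ((m:ℝ) + 1 + 2) = (m:ℝ) + 3 := by ring
      rw [h4]
      linarith [heq.le, heq.ge]
    push_cast
    push_cast at ih
    linarith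

lemma aux_H_lower (n : ℕ) (hn : 2 ≤ n) :
    2⁻¹ * Real.log n ≤ (∑ k ∈ range n, ((k : ℝ) + 1)⁻¹) - 1 := by
  have hsplit : ∑ k ∈ range n, ((k : ℝ) + 1)⁻¹
      = (∑ k ∈ range (n - 1), ((k : ℝ) + 2)⁻¹) + 1 := by
    have hn1 : n = (n - 1) + 1 := by omega
    rw [hn1, Finset.sum_range_succ']
    congr 1
    · apply Finset.sum_congr rfl
      intro x _
      push_cast
      ring_nf
    · norm_num
  have htel := aux_telescope (n - 1)
  have hcast : ((n - 1 : ℕ) : ℝ) + 2 = (n : ℝ) + 1 := by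
    rw [Nat.cast_sub (by omega)]; push_cast; ring
  rw [hcast] at htel
  have hkey : 2⁻¹ * Real.log n ≤ Real.log ((n : ℝ) + 1) - Real.log 2 := by
    have hn0 : (0 : ℝ) ≤ (n : ℝ) := by positivity
    have hs : Real.sqrt n ≤ ((n : ℝ) + 1) / 2 := by
      nlinarith [sq_nonneg (Real.sqrt n - 1), Real.sq_sqrt hn0, Real.sqrt_nonneg (n : ℝ)]
    have hn2 : (0:ℝ) < (n:ℝ) := by
      have : (2:ℝ) ≤ (n:ℝ) := by exact_mod_cast hn
      linarith
    have hlog := Real.log_le_log (Real.sqrt_pos.mpr hn2) hs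
    rw [Real.log_sqrt hn0, Real.log_div (by positivity) (by norm_num)] at hlog
    linarith
  linarith [hsplit, htel, hkey]

end Aux

namespace SurvData

variable {n d : ℕ}

lemma inner_abs_le {CZ Cβ : ℝ} (hCβ : 0 ≤ Cβ) {β x : EuclideanSpace ℝ (Fin d)}
    (hβ : ‖β‖ ≤ Cβ) (hx : ‖x‖ ≤ CZ) : |⟪β, x⟫| ≤ CZ * Cβ := by
  have h := abs_real_inner_le_norm β x
  have h2 : ‖β‖ * ‖x‖ ≤ Cβ * CZ :=
    mul_le_mul hβ hx (norm_nonneg _) hCβ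
  rw [mul_comm CZ Cβ]; linarith

lemma exp_inner_le {CZ Cβ : ℝ} (hCβ : 0 ≤ Cβ) {β x : EuclideanSpace ℝ (Fin d)}
    (hβ : ‖β‖ ≤ Cβ) (hx : ‖x‖ ≤ CZ) : Real.exp ⟪β, x⟫ ≤ Real.exp (CZ * Cβ) :=
  Real.exp_le_exp.mpr (le_trans (le_abs_self _) (inner_abs_le hCβ hβ hx))

lemma exp_inner_ge {CZ Cβ : ℝ} (hCβ : 0 ≤ Cβ) {β x : EuclideanSpace ℝ (Fin d)}
    (hβ : ‖β‖ ≤ Cβ) (hx : ‖x‖ ≤ CZ) : (Real.exp (CZ * Cβ))⁻¹ ≤ Real.exp ⟪β, x⟫ := by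
  rw [← Real.exp_neg]
  apply Real.exp_le_exp.mpr
  have := (abs_le.mp (inner_abs_le hCβ hβ hx)).1
  linarith

lemma S0_nonneg (D : SurvData n d) (β : EuclideanSpace ℝ (Fin d)) (t : ℝ) :
    0 ≤ D.S0 β t := by
  apply mul_nonneg (by positivity)
  apply Finset.sum_nonneg
  intro j _
  split
  · exact (Real.exp_pos _).le
  · exact le_refl 0

lemma norm_S1_le {CZ : ℝ} (hCZ : 0 ≤ CZ) (D : SurvData n d) (hb : D.covBound CZ)
    (β : EuclideanSpace ℝ (Fin d)) {t : ℝ} (ht : t ∈ Set.Icc (0:ℝ) 1) :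
    ‖D.S1 β t‖ ≤ CZ * D.S0 β t := by
  rw [S1, S0, norm_smul, norm_inv, Real.norm_natCast]
  rw [mul_comm CZ, mul_assoc]
  apply mul_le_mul_of_nonneg_left _ (by positivity)
  calc ‖∑ j, if t ≤ D.T j then Real.exp ⟪β, D.Z j t⟫ • D.Z j t else 0‖
      ≤ ∑ j, ‖if t ≤ D.T j then Real.exp ⟪β, D.Z j t⟫ • D.Z j t else 0‖ :=
        norm_sum_le _ _
    _ ≤ ∑ j, (if t ≤ D.T j then Real.exp ⟪β, D.Z j t⟫ else 0) * CZ := by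
        apply Finset.sum_le_sum
        intro j _
        split
        · rw [norm_smul, Real.norm_eq_abs, Real.abs_exp]
          exact mul_le_mul_of_nonneg_left (hb j t ht) (Real.exp_pos _).le
        · simp
    _ = (∑ j, if t ≤ D.T j then Real.exp ⟪β, D.Z j t⟫ else 0) * CZ :=
        (Finset.sum_mul ..).symm
  
lemma norm_Zbar_le_s2 {CZ : ℝ} (hCZ : 0 ≤ CZ) (D : SurvData n d) (hb : D.covBound CZ)
    (β : EuclideanSpace ℝ (Fin d)) {t : ℝ} (ht : t ∈ Set.Icc (0:ℝ) 1) :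
    ‖D.Zbar β t‖ ≤ CZ := by
  rcases eq_or_lt_of_le (D.S0_nonneg β t) with h0 | h0
  · have h1 : ‖D.S1 β t‖ ≤ 0 := by
      have := D.norm_S1_le hCZ hb β ht
      rw [← h0] at this; linarith
    have h2 : D.S1 β t = 0 := norm_le_zero_iff.mp h1
    rw [Zbar, h2, smul_zero, norm_zero]; exact hCZ
  · rw [Zbar, norm_smul, norm_inv, Real.norm_eq_abs, abs_of_pos h0]
    rw [inv_mul_le_iff₀ h0]
    exact (D.norm_S1_le hCZ hb β ht).trans_eq (mul_comm _ _)

lemma S0_ge {CZ Cβ : ℝ} (hCβ : 0 ≤ Cβ) (D : SurvData n d) (hb : D.covBound CZ)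
    {β : EuclideanSpace ℝ (Fin d)} (hβ : ‖β‖ ≤ Cβ) {t : ℝ} (ht : t ∈ Set.Icc (0:ℝ) 1) :
    ((Finset.univ.filter fun j => t ≤ D.T j).card : ℝ) / n * (Real.exp (CZ * Cβ))⁻¹
      ≤ D.S0 β t := by
  have key : ((Finset.univ.filter fun j => t ≤ D.T j).card : ℝ) * (Real.exp (CZ*Cβ))⁻¹
      ≤ ∑ j, if t ≤ D.T j then Real.exp ⟪β, D.Z j t⟫ else 0 := by
    calc ((Finset.univ.filter fun j => t ≤ D.T j).card : ℝ) * (Real.exp (CZ*Cβ))⁻¹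
        = ∑ _j ∈ Finset.univ.filter fun j => t ≤ D.T j, (Real.exp (CZ*Cβ))⁻¹ := by
          rw [Finset.sum_const, nsmul_eq_mul]
      _ ≤ ∑ j ∈ Finset.univ.filter fun j => t ≤ D.T j, Real.exp ⟪β, D.Z j t⟫ := by
          apply Finset.sum_le_sum
          intro j _
          exact exp_inner_ge hCβ hβ (hb j t ht)
      _ = ∑ j, if t ≤ D.T j then Real.exp ⟪β, D.Z j t⟫ else 0 := by
          rw [Finset.sum_filter]
  calc ((Finset.univ.filter fun j => t ≤ D.T j).card : ℝ) / n * (Real.exp (CZ * Cβ))⁻¹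
      = (n:ℝ)⁻¹ * (((Finset.univ.filter fun j => t ≤ D.T j).card : ℝ) * (Real.exp (CZ*Cβ))⁻¹) := by
        ring
    _ ≤ (n:ℝ)⁻¹ * ∑ j, if t ≤ D.T j then Real.exp ⟪β, D.Z j t⟫ else 0 :=
        mul_le_mul_of_nonneg_left key (by positivity)
    _ = D.S0 β t := rfl

lemma S0_diff_le {CZ Cβ : ℝ} (hCβ : 0 ≤ Cβ) (D D' : SurvData n d)
    (hT : D.T = D'.T) {i0 : Fin n} (hZ : ∀ i, i ≠ i0 → D.Z i = D'.Z i)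
    (hb : D.covBound CZ) (hb' : D'.covBound CZ)
    {β : EuclideanSpace ℝ (Fin d)} (hβ : ‖β‖ ≤ Cβ) {t : ℝ} (ht : t ∈ Set.Icc (0:ℝ) 1) :
    |D.S0 β t - D'.S0 β t| ≤ Real.exp (CZ * Cβ) / n := by
  have hsum : D.S0 β t - D'.S0 β t
      = (n : ℝ)⁻¹ * ((if t ≤ D.T i0 then Real.exp ⟪β, D.Z i0 t⟫ else 0)
        - (if t ≤ D'.T i0 then Real.exp ⟪β, D'.Z i0 t⟫ else 0)) := by
    rw [S0, S0, ← mul_sub, ← Finset.sum_sub_distrib]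
    congr 1
    apply Finset.sum_eq_single_of_mem i0 (Finset.mem_univ i0)
    intro j _ hj
    rw [hT, hZ j hj, sub_self]
  have hbnd : ∀ (E : SurvData n d), E.covBound CZ →
      0 ≤ (if t ≤ E.T i0 then Real.exp ⟪β, E.Z i0 t⟫ else 0) ∧
      (if t ≤ E.T i0 then Real.exp ⟪β, E.Z i0 t⟫ else 0) ≤ Real.exp (CZ * Cβ) := by
    intro E hE
    constructor
    · split
      · exact (Real.exp_pos _).le
      · exact le_refl 0
    · split
      · exact exp_inner_le hCβ hβ (hE i0 t ht)
      · exact (Real.exp_pos _).le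
  obtain ⟨h1, h2⟩ := hbnd D hb
  obtain ⟨h3, h4⟩ := hbnd D' hb'
  rw [hsum, abs_mul, abs_inv, Nat.abs_cast, div_eq_inv_mul]
  apply mul_le_mul_of_nonneg_left _ (by positivity)
  rw [abs_sub_le_iff]
  constructor <;> linarith

lemma S1_diff_le {CZ Cβ : ℝ} (hCZ : 0 ≤ CZ) (hCβ : 0 ≤ Cβ) (D D' : SurvData n d)
    (hT : D.T = D'.T) {i0 : Fin n} (hZ : ∀ i, i ≠ i0 → D.Z i = D'.Z i)
    (hb : D.covBound CZ) (hb' : D'.covBound CZ)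
    {β : EuclideanSpace ℝ (Fin d)} (hβ : ‖β‖ ≤ Cβ) {t : ℝ} (ht : t ∈ Set.Icc (0:ℝ) 1) :
    ‖D.S1 β t - D'.S1 β t‖ ≤ 2 * CZ * Real.exp (CZ * Cβ) / n := by
  have hsum : D.S1 β t - D'.S1 β t
      = (n : ℝ)⁻¹ • ((if t ≤ D.T i0 then Real.exp ⟪β, D.Z i0 t⟫ • D.Z i0 t else 0)
        - (if t ≤ D'.T i0 then Real.exp ⟪β, D'.Z i0 t⟫ • D'.Z i0 t else 0)) := by
    rw [S1, S1, ← smul_sub, ← Finset.sum_sub_distrib]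
    congr 1
    apply Finset.sum_eq_single_of_mem i0 (Finset.mem_univ i0)
    intro j _ hj
    rw [hT, hZ j hj, sub_self]
  have hbnd : ∀ (E : SurvData n d), E.covBound CZ →
      ‖if t ≤ E.T i0 then Real.exp ⟪β, E.Z i0 t⟫ • E.Z i0 t else 0‖ ≤ CZ * Real.exp (CZ * Cβ) := by
    intro E hE
    split
    · rw [norm_smul, Real.norm_eq_abs, Real.abs_exp, mul_comm]
      exact mul_le_mul (hE i0 t ht) (exp_inner_le hCβ hβ (hE i0 t ht)) (Real.exp_pos _).le hCZ
    · rw [norm_zero]; positivity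
  rw [hsum, norm_smul, norm_inv, Real.norm_natCast, div_eq_inv_mul]
  apply mul_le_mul_of_nonneg_left _ (by positivity)
  calc ‖_ - _‖ ≤ _ + _ := norm_sub_le _ _
    _ ≤ CZ * Real.exp (CZ*Cβ) + CZ * Real.exp (CZ*Cβ) := add_le_add (hbnd D hb) (hbnd D' hb')
    _ = 2 * CZ * Real.exp (CZ*Cβ) := by ring

lemma Zbar_diff_le {CZ Cβ : ℝ} (hCZ : 0 ≤ CZ) (hCβ : 0 ≤ Cβ) (D D' : SurvData n d)
    (hT : D.T = D'.T) {i0 : Fin n} (hZ : ∀ i, i ≠ i0 → D.Z i = D'.Z i)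
    (hb : D.covBound CZ) (hb' : D'.covBound CZ)
    {β : EuclideanSpace ℝ (Fin d)} (hβ : ‖β‖ ≤ Cβ) {t : ℝ} (ht : t ∈ Set.Icc (0:ℝ) 1)
    (hS0 : 0 < D.S0 β t) (hS0' : 0 < D'.S0 β t) :
    ‖D.Zbar β t - D'.Zbar β t‖ ≤ (D.S0 β t)⁻¹ * (3 * CZ * Real.exp (CZ * Cβ) / n) := by
  set a := D.S0 β t with ha
  set b := D'.S0 β t with hbdef
  have hid : D.Zbar β t - D'.Zbar β t
      = a⁻¹ • (D.S1 β t - D'.S1 β t) + ((b - a) * a⁻¹) • D'.Zbar β t := by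
    simp only [Zbar, ← ha, ← hbdef]
    match_scalars <;> (field_simp; try ring)
  rw [hid]
  have h1 := S1_diff_le hCZ hCβ D D' hT hZ hb hb' hβ ht
  have h2 := S0_diff_le hCβ D D' hT hZ hb hb' hβ ht
  have h3 := D'.norm_Zbar_le_s2 hCZ hb' β ht
  calc ‖a⁻¹ • (D.S1 β t - D'.S1 β t) + ((b - a) * a⁻¹) • D'.Zbar β t‖
      ≤ ‖a⁻¹ • (D.S1 β t - D'.S1 β t)‖ + ‖((b - a) * a⁻¹) • D'.Zbar β t‖ :=
        norm_add_le _ _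
    _ = a⁻¹ * ‖D.S1 β t - D'.S1 β t‖ + |b - a| * a⁻¹ * ‖D'.Zbar β t‖ := by
        rw [norm_smul, norm_smul, Real.norm_eq_abs, Real.norm_eq_abs, abs_mul,
          abs_inv, abs_of_pos hS0]
    _ ≤ a⁻¹ * (2 * CZ * Real.exp (CZ*Cβ) / n) + (Real.exp (CZ*Cβ) / n) * a⁻¹ * CZ := by
        apply add_le_add
        · exact mul_le_mul_of_nonneg_left h1 (by positivity)
        · apply mul_le_mul _ h3 (norm_nonneg _) (by positivity)
          apply mul_le_mul_of_nonneg_right _ (by positivity)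
          rw [abs_sub_comm]
          exact h2
    _ = a⁻¹ * (3 * CZ * Real.exp (CZ*Cβ) / n) := by ring



end SurvData

open Finset in
lemma score_diff_le {CZ Cβ : ℝ} (hCZ : 1 ≤ CZ) (hCβ : 0 < Cβ) {n d : ℕ} (hn : 2 ≤ n)
    {β : EuclideanSpace ℝ (Fin d)} (hβ : ‖β‖ ≤ Cβ) (D D' : SurvData n d)
    (hv : D.valid) (hv' : D'.valid) (hb : D.covBound CZ) (hb' : D'.covBound CZ)
    (hnb : D.CovNeighbor D') :
    ‖D.score β - D'.score β‖ ≤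
      (4 * CZ + 6 * CZ * Real.exp (4 * CZ * Cβ) * Real.log (n + 1)) / n := by
  classical
  obtain ⟨hT, hΔ, i0, hZ⟩ := hnb
  have hCZ0 : (0:ℝ) ≤ CZ := le_trans zero_le_one hCZ
  have hCβ0 : (0:ℝ) ≤ Cβ := hCβ.le
  have hn0 : (0:ℝ) < n := by exact_mod_cast lt_of_lt_of_le (by norm_num) hn
  set E := Real.exp (CZ * Cβ) with hE
  have hEpos : 0 < E := Real.exp_pos _
  -- risk-set counts
  set m : Fin n → ℕ := fun i => (univ.filter fun j => D.T i ≤ D.T j).card with hm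
  have hm1 : ∀ i, 1 ≤ m i := by
    intro i
    apply Finset.card_pos.mpr
    exact ⟨i, by simp⟩
  -- positivity of S0 at observed times
  have hS0pos : ∀ i : Fin n, 0 < D.S0 β (D.T i) := by
    intro i
    have := D.S0_ge hCβ0 hb hβ (hv i)
    have hmpos : (0:ℝ) < ((m i : ℝ)) := by exact_mod_cast hm1 i
    have : (0:ℝ) < (m i : ℝ) / n * E⁻¹ := by positivity
    calc (0:ℝ) < (m i : ℝ) / n * E⁻¹ := this
      _ ≤ D.S0 β (D.T i) := D.S0_ge hCβ0 hb hβ (hv i)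
  have hS0inv : ∀ i : Fin n, (D.S0 β (D.T i))⁻¹ ≤ (n : ℝ) * E / m i := by
    intro i
    have h1 : (m i : ℝ) / n * E⁻¹ ≤ D.S0 β (D.T i) := D.S0_ge hCβ0 hb hβ (hv i)
    have hmpos : (0:ℝ) < (m i : ℝ) := by exact_mod_cast hm1 i
    have h2 : (0:ℝ) < (m i : ℝ) / n * E⁻¹ := by positivity
    have := inv_anti₀ h2 h1
    calc (D.S0 β (D.T i))⁻¹ ≤ ((m i : ℝ) / n * E⁻¹)⁻¹ := this
      _ = (n : ℝ) * E / m i := by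
          field_simp
  have hS0'pos : ∀ i : Fin n, 0 < D'.S0 β (D.T i) := by
    intro i
    have h1 : (univ.filter fun j => D.T i ≤ D'.T j).card = m i := by rw [hm, ← hT]
    have h2 := D'.S0_ge hCβ0 hb' hβ (show D.T i ∈ Set.Icc (0:ℝ) 1 from hv i)
    rw [h1] at h2
    have hmpos : (0:ℝ) < ((m i : ℝ)) := by exact_mod_cast hm1 i
    calc (0:ℝ) < (m i : ℝ) / n * E⁻¹ := by positivity
      _ ≤ _ := h2
  -- pointwise Zbar difference bound
  have hZbar : ∀ i : Fin n,
      ‖D.Zbar β (D.T i) - D'.Zbar β (D.T i)‖ ≤ 3 * CZ * (E * E) / m i := by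
    intro i
    have h := SurvData.Zbar_diff_le hCZ0 hCβ0 D D' hT hZ hb hb' hβ (hv i)
      (hS0pos i) (hS0'pos i)
    have hmpos : (0:ℝ) < (m i : ℝ) := by exact_mod_cast hm1 i
    calc ‖D.Zbar β (D.T i) - D'.Zbar β (D.T i)‖
        ≤ (D.S0 β (D.T i))⁻¹ * (3 * CZ * E / n) := h
      _ ≤ ((n : ℝ) * E / m i) * (3 * CZ * E / n) := by
          apply mul_le_mul_of_nonneg_right (hS0inv i) (by positivity)
      _ = 3 * CZ * (E * E) / m i := by field_simp
  -- score difference as one sum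
  have hscore : D.score β - D'.score β
      = (n : ℝ)⁻¹ • ∑ i, (if D.Δ i then
          (D.Z i (D.T i) - D'.Z i (D.T i)) - (D.Zbar β (D.T i) - D'.Zbar β (D.T i))
          else 0) := by
    rw [SurvData.score, SurvData.score, ← smul_sub, ← Finset.sum_sub_distrib]
    congr 1
    apply Finset.sum_congr rfl
    intro i _
    rw [← hT, ← hΔ]
    split
    · abel
    · simp
  rw [hscore, norm_smul, norm_inv, Real.norm_natCast]
  have hsum : ‖∑ i, (if D.Δ i then
        (D.Z i (D.T i) - D'.Z i (D.T i)) - (D.Zbar β (D.T i) - D'.Zbar β (D.T i))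
        else 0)‖ ≤ 2 * CZ + 3 * CZ * (E * E) * (2 * Real.log (n + 1)) := by
    calc ‖∑ i, (if D.Δ i then
          (D.Z i (D.T i) - D'.Z i (D.T i)) - (D.Zbar β (D.T i) - D'.Zbar β (D.T i))
          else 0)‖
        ≤ ∑ i, ‖(if D.Δ i then
          (D.Z i (D.T i) - D'.Z i (D.T i)) - (D.Zbar β (D.T i) - D'.Zbar β (D.T i))
          else 0)‖ := norm_sum_le _ _
      _ ≤ ∑ i, (‖D.Z i (D.T i) - D'.Z i (D.T i)‖
            + ‖D.Zbar β (D.T i) - D'.Zbar β (D.T i)‖) := by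
          apply Finset.sum_le_sum
          intro i _
          split
          · exact norm_sub_le _ _
          · rw [norm_zero]; positivity
      _ = (∑ i, ‖D.Z i (D.T i) - D'.Z i (D.T i)‖)
            + ∑ i, ‖D.Zbar β (D.T i) - D'.Zbar β (D.T i)‖ := Finset.sum_add_distrib
      _ ≤ 2 * CZ + 3 * CZ * (E * E) * (2 * Real.log (n + 1)) := by
          apply add_le_add
          · -- only i0 contributes
            have h1 : ∑ i, ‖D.Z i (D.T i) - D'.Z i (D.T i)‖
                = ‖D.Z i0 (D.T i0) - D'.Z i0 (D.T i0)‖ := by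
              apply Finset.sum_eq_single_of_mem i0 (Finset.mem_univ i0)
              intro j _ hj
              rw [hZ j hj, sub_self, norm_zero]
            rw [h1]
            calc ‖D.Z i0 (D.T i0) - D'.Z i0 (D.T i0)‖
                ≤ ‖D.Z i0 (D.T i0)‖ + ‖D'.Z i0 (D.T i0)‖ := norm_sub_le _ _
              _ ≤ CZ + CZ := add_le_add (hb i0 _ (hv i0)) (hb' i0 _ (hv i0))
              _ = 2 * CZ := by ring
          · calc ∑ i, ‖D.Zbar β (D.T i) - D'.Zbar β (D.T i)‖
                ≤ ∑ i, 3 * CZ * (E * E) / (m i : ℝ) :=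
                  Finset.sum_le_sum fun i _ => hZbar i
              _ = 3 * CZ * (E * E) * ∑ i, ((m i : ℝ))⁻¹ := by
                  rw [Finset.mul_sum]
                  apply Finset.sum_congr rfl
                  intro i _
                  rw [div_eq_mul_inv]
              _ ≤ 3 * CZ * (E * E) * (2 * Real.log (n + 1)) := by
                  apply mul_le_mul_of_nonneg_left _ (by positivity)
                  calc ∑ i, ((m i : ℝ))⁻¹
                      ≤ ∑ k ∈ range n, ((k : ℝ) + 1)⁻¹ := aux_sum_inv_risk_le D.T
                    _ ≤ 2 * Real.log (n + 1) := aux_H_upper n hn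
  calc (n:ℝ)⁻¹ * ‖∑ i, (if D.Δ i then
        (D.Z i (D.T i) - D'.Z i (D.T i)) - (D.Zbar β (D.T i) - D'.Zbar β (D.T i))
        else 0)‖
      ≤ (n:ℝ)⁻¹ * (2 * CZ + 3 * CZ * (E * E) * (2 * Real.log (n + 1))) :=
        mul_le_mul_of_nonneg_left hsum (by positivity)
    _ ≤ (4 * CZ + 6 * CZ * Real.exp (4 * CZ * Cβ) * Real.log (n + 1)) / n := by
        rw [div_eq_inv_mul]
        apply mul_le_mul_of_nonneg_left _ (by positivity)
        have hEE : E * E ≤ Real.exp (4 * CZ * Cβ) := by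
          rw [hE, ← Real.exp_add]
          apply Real.exp_le_exp.mpr
          nlinarith
        have hlog : (0:ℝ) ≤ Real.log (n + 1) := by
          apply Real.log_nonneg
          have : (2:ℝ) ≤ (n:ℝ) := by exact_mod_cast hn
          linarith
        have h7 : 6 * CZ * ((E * E) * Real.log (n + 1))
            ≤ 6 * CZ * (Real.exp (4 * CZ * Cβ) * Real.log (n + 1)) :=
          mul_le_mul_of_nonneg_left (mul_le_mul_of_nonneg_right hEE hlog) (by positivity)
        nlinarith [h7, hCZ0]

open Finset in
lemma aux_reflect (n : ℕ) :
    ∑ k ∈ range n, ((n : ℝ) - k)⁻¹ = ∑ k ∈ range n, ((k : ℝ) + 1)⁻¹ := by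
  rw [← Finset.sum_range_reflect]
  apply Finset.sum_congr rfl
  intro j hj
  rw [mem_range] at hj
  congr 1
  have h1 : n - 1 - j = n - (j + 1) := by omega
  rw [h1, Nat.cast_sub (by omega)]
  push_cast; ring

open Finset in
lemma lower_construction {CZ Cβ : ℝ} (hCZ : 1 ≤ CZ) (hCβ : 0 < Cβ) (n d : ℕ)
    (hn : 2 ≤ n) (hd : 1 ≤ d) :
    ∃ (β : EuclideanSpace ℝ (Fin d)) (D D' : SurvData n d),
      ‖β‖ ≤ Cβ ∧ D.valid ∧ D'.valid ∧ D.covBound CZ ∧ D'.covBound CZ ∧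
      SurvData.CovNeighbor D D' ∧
      (2⁻¹ : ℝ) * Real.log n / n ≤ ‖D.score β - D'.score β‖ := by
  classical
  have hCZ0 : (0:ℝ) < CZ := lt_of_lt_of_le zero_lt_one hCZ
  have hn0 : (0:ℝ) < n := by exact_mod_cast lt_of_lt_of_le (by norm_num) hn
  set i1 : Fin d := ⟨0, hd⟩ with hi1
  set e1 : EuclideanSpace ℝ (Fin d) := EuclideanSpace.single i1 1 with he1def
  have he1 : ‖e1‖ = 1 := by rw [he1def, EuclideanSpace.norm_single, norm_one]
  set i0 : Fin n := ⟨n - 1, by omega⟩ with hi0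
  set Tf : Fin n → ℝ := fun i => ((i : ℕ) + 1 : ℝ) / n with hTf
  set Zf : Fin n → ℝ → EuclideanSpace ℝ (Fin d) :=
    fun i _ => if i = i0 then CZ • e1 else 0 with hZf
  set D : SurvData n d := ⟨Tf, fun _ => true, fun _ _ => 0⟩ with hD
  set D' : SurvData n d := ⟨Tf, fun _ => true, Zf⟩ with hD'
  have hTle : ∀ i j : Fin n, Tf i ≤ Tf j ↔ i ≤ j := by
    intro i j
    rw [hTf]
    rw [div_le_div_iff_of_pos_right hn0]
    constructor
    · intro h
      have : ((i:ℕ):ℝ) ≤ ((j:ℕ):ℝ) := by linarith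
      exact_mod_cast this
    · intro h
      have : ((i:ℕ):ℝ) ≤ ((j:ℕ):ℝ) := by exact_mod_cast h
      linarith
  have hvalid : ∀ i : Fin n, Tf i ∈ Set.Icc (0:ℝ) 1 := by
    intro i
    constructor
    · positivity
    · rw [div_le_one hn0]
      have : (i:ℕ) + 1 ≤ n := i.isLt
      exact_mod_cast this
  -- score of D is zero
  have hscoreD : D.score 0 = 0 := by
    have hS1 : ∀ t, D.S1 0 t = 0 := by
      intro t
      rw [SurvData.S1]
      have : ∀ j : Fin n, (if t ≤ D.T j then Real.exp ⟪(0 : EuclideanSpace ℝ (Fin d)), D.Z j t⟫ • D.Z j t else 0) = 0 := by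
        intro j
        have hz : D.Z j t = 0 := rfl
        rw [hz, smul_zero, ite_self]
      rw [Finset.sum_congr rfl fun j _ => this j, Finset.sum_const, smul_zero, smul_zero]
    rw [SurvData.score]
    have : ∀ i : Fin n, (if D.Δ i then D.Z i (D.T i) - D.Zbar 0 (D.T i) else 0) = 0 := by
      intro i
      have hz : D.Z i (D.T i) = 0 := rfl
      rw [SurvData.Zbar, hS1, smul_zero, hz, sub_zero, ite_self]
    rw [Finset.sum_congr rfl fun i _ => this i, Finset.sum_const, smul_zero, smul_zero]
  -- S0 of D' at observed times
  have hS0' : ∀ i : Fin n, D'.S0 0 (Tf i) = ((n:ℝ) - i) / n := by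
    intro i
    rw [SurvData.S0]
    have h1 : ∀ j : Fin n, (if Tf i ≤ D'.T j then Real.exp ⟪(0 : EuclideanSpace ℝ (Fin d)), D'.Z j (Tf i)⟫ else 0) = if i ≤ j then (1:ℝ) else 0 := by
      intro j
      have hT : D'.T j = Tf j := rfl
      rw [hT, inner_zero_left, Real.exp_zero]
      simp [hTle i j]
    rw [Finset.sum_congr rfl fun j _ => h1 j, Finset.sum_boole]
    have h2 : (univ.filter fun j => i ≤ j) = Ici i := by
      ext j; simp [mem_Ici]
    rw [h2, Fin.card_Ici]
    have h3 : ((n - (i:ℕ) : ℕ) : ℝ) = (n:ℝ) - (i:ℕ) := by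
      rw [Nat.cast_sub i.isLt.le]
    rw [h3]
    ring
  -- S1 of D' at observed times
  have hS1' : ∀ i : Fin n, D'.S1 0 (Tf i) = (n:ℝ)⁻¹ • (CZ • e1) := by
    intro i
    rw [SurvData.S1]
    congr 1
    have h1 : ∀ j : Fin n, (if Tf i ≤ D'.T j then Real.exp ⟪(0 : EuclideanSpace ℝ (Fin d)), D'.Z j (Tf i)⟫ • D'.Z j (Tf i) else 0) = if j = i0 then CZ • e1 else 0 := by
      intro j
      have hT : D'.T j = Tf j := rfl
      have hZ : D'.Z j (Tf i) = if j = i0 then CZ • e1 else 0 := rfl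
      rw [hT, inner_zero_left, Real.exp_zero, one_smul, hZ]
      by_cases hj : j = i0
      · have hij : i ≤ j := by
          rw [Fin.le_def]
          have h2 : (j : ℕ) = n - 1 := by rw [hj]
          have h3 := i.isLt
          omega
        rw [if_pos ((hTle i j).mpr hij)]
      · rw [if_neg hj, ite_self]
    rw [Finset.sum_congr rfl fun j _ => h1 j, Finset.sum_ite_eq' univ i0 (fun _ => CZ • e1)]
    rw [if_pos (Finset.mem_univ i0)]
  -- Zbar of D'
  have hZbar' : ∀ i : Fin n, D'.Zbar 0 (Tf i) = (CZ * ((n:ℝ) - i)⁻¹) • e1 := by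
    intro i
    have hpos : (0:ℝ) < (n:ℝ) - (i:ℕ) := by
      have : (i:ℕ) < n := i.isLt
      have : ((i:ℕ):ℝ) < (n:ℝ) := by exact_mod_cast this
      linarith
    rw [SurvData.Zbar, hS0' i, hS1' i, smul_smul, smul_smul]
    congr 1
    field_simp
  -- score of D'
  have hscoreD' : D'.score 0 = ((n:ℝ)⁻¹ * (CZ * (1 - ∑ i : Fin n, ((n:ℝ) - i)⁻¹))) • e1 := by
    rw [SurvData.score]
    have h1 : ∀ i : Fin n, (if D'.Δ i then D'.Z i (D'.T i) - D'.Zbar 0 (D'.T i) else 0)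
        = (if i = i0 then CZ • e1 else 0) - (CZ * ((n:ℝ) - i)⁻¹) • e1 := by
      intro i
      have hΔ : D'.Δ i = true := rfl
      have hT : D'.T i = Tf i := rfl
      have hZ : D'.Z i (D'.T i) = if i = i0 then CZ • e1 else 0 := rfl
      rw [hΔ, if_pos rfl, hT, hZbar' i, hZ]
    rw [Finset.sum_congr rfl fun i _ => h1 i, Finset.sum_sub_distrib,
      Finset.sum_ite_eq' univ i0 (fun _ => CZ • e1), if_pos (Finset.mem_univ i0),
      ← Finset.sum_smul, ← sub_smul, smul_smul]
    congr 1
    rw [← Finset.mul_sum]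
    ring
  -- the harmonic sum
  set Hs := ∑ i : Fin n, ((n:ℝ) - (i:ℕ))⁻¹ with hHs
  have hHeq : Hs = ∑ k ∈ range n, ((k:ℝ) + 1)⁻¹ := by
    rw [hHs, Fin.sum_univ_eq_sum_range (fun k => ((n:ℝ) - k)⁻¹) n, aux_reflect]
  have hH1 : 2⁻¹ * Real.log n ≤ Hs - 1 := by
    rw [hHeq]; exact aux_H_lower n hn
  have hlogn : 0 ≤ Real.log n := by
    apply Real.log_nonneg
    have : (2:ℝ) ≤ (n:ℝ) := by exact_mod_cast hn
    linarith
  have hHs1 : 1 ≤ Hs := by nlinarith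
  refine ⟨0, D, D', by rw [norm_zero]; exact hCβ.le, hvalid, hvalid, ?_, ?_, ?_, ?_⟩
  · intro i t _
    show ‖(0 : EuclideanSpace ℝ (Fin d))‖ ≤ CZ
    rw [norm_zero]; exact hCZ0.le
  · intro i t _
    show ‖if i = i0 then CZ • e1 else 0‖ ≤ CZ
    by_cases hi : i = i0
    · rw [if_pos hi, norm_smul, Real.norm_eq_abs, he1, mul_one, abs_of_pos hCZ0]
    · rw [if_neg hi, norm_zero]; exact hCZ0.le
  · exact ⟨rfl, rfl, i0, fun i hi => funext fun t => (if_neg hi).symm⟩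
  · rw [hscoreD, hscoreD', zero_sub, norm_neg, norm_smul, Real.norm_eq_abs, he1, mul_one]
    have habs : |(n:ℝ)⁻¹ * (CZ * (1 - Hs))| = (n:ℝ)⁻¹ * (CZ * (Hs - 1)) := by
      rw [abs_mul, abs_mul, abs_of_pos (by positivity : (0:ℝ) < (n:ℝ)⁻¹),
        abs_of_pos hCZ0, abs_sub_comm, abs_of_nonneg (by linarith : (0:ℝ) ≤ Hs - 1)]
    rw [habs]
    have hinv : (0:ℝ) < (n:ℝ)⁻¹ := by positivity
    calc 2⁻¹ * Real.log n / n ≤ (Hs - 1) / n := by gcongr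
      _ = (n:ℝ)⁻¹ * (1 * (Hs - 1)) := by ring
      _ ≤ (n:ℝ)⁻¹ * (CZ * (Hs - 1)) := by
          apply mul_le_mul_of_nonneg_left _ hinv.le
          apply mul_le_mul_of_nonneg_right hCZ (by linarith)

/-- Lemma B.1 (Case 2): the sensitivity of the Cox score with respect to a single
covariate path is of exact order `log n / n`. -/
theorem cox_score_covariate_sensitivity (CZ Cβ : ℝ) (hCZ : 1 ≤ CZ) (hCβ : 0 < Cβ) :
    (∀ (n d : ℕ), 2 ≤ n → 1 ≤ d → ∀ β : EuclideanSpace ℝ (Fin d), ‖β‖ ≤ Cβ →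
      ∀ D D' : SurvData n d, D.valid → D'.valid → D.covBound CZ → D'.covBound CZ →
        SurvData.CovNeighbor D D' →
        ‖D.score β - D'.score β‖ ≤
          (4 * CZ + 6 * CZ * Real.exp (4 * CZ * Cβ) * Real.log (n + 1)) / n) ∧
    (∃ c : ℝ, 0 < c ∧ ∀ (n d : ℕ), 2 ≤ n → 1 ≤ d →
      ∃ (β : EuclideanSpace ℝ (Fin d)) (D D' : SurvData n d),
        ‖β‖ ≤ Cβ ∧ D.valid ∧ D'.valid ∧ D.covBound CZ ∧ D'.covBound CZ ∧
        SurvData.CovNeighbor D D' ∧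
        c * Real.log n / n ≤ ‖D.score β - D'.score β‖) := by
  constructor
  · intro n d hn _hd β hβ D D' hv hv' hb hb' hnb
    exact score_diff_le hCZ hCβ hn hβ D D' hv hv' hb hb' hnb
  · exact ⟨2⁻¹, by norm_num, fun n d hn hd => lower_construction hCZ hCβ n d hn hd⟩
end
end

section
/- Time-neighbouring sensitivity (Lemma B.1, Case 3): Let C_Z ≥ 1 and C_β > 0. For every n ≥ 2, every d ≥ 1, every β ∈ ℝ^d with ‖β‖₂ ≤ C_β, and every pair of survival datasets D, D' of size n that satisfy the covariate bound C_Z and agree in all censoring indicators and all covariate paths while differing in at most one observed time, one has ‖ℓ̇(β; D) − ℓ̇(β; D')‖₂ ≤ (4 C_Z + 6 C_Z e^{4 C_Z C_β} log(n+1)) / n. Moreover, there exists a constant c > 0 depending only on C_Z and C_β such that for every n ≥ 2 and every d ≥ 1 there exist such a pair of datasets and a β with ‖β‖₂ ≤ C_β for which ‖ℓ̇(β; D) − ℓ̇(β; D')‖₂ ≥ c log(n)/n. Hence this sensitivity is of exact order log(n)/n. -/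
open scoped BigOperators
open MeasureTheory Real
open scoped RealInnerProductSpace
noncomputable section

/-- Time-neighbouring datasets: same censoring indicators and covariate paths, and
at most one observed time differs. -/
def SurvData.TimeNeighbor {n d : ℕ} (D D' : SurvData n d) : Prop :=
  D.Δ = D'.Δ ∧ D.Z = D'.Z ∧ ∃ i0 : Fin n, ∀ i, i ≠ i0 → D.T i = D'.T i

namespace CoxAux
open SurvData Finset

variable {n d : ℕ} {CZ Cβ : ℝ} {β : EuclideanSpace ℝ (Fin d)} {D D' : SurvData n d}

lemma inner_abs_le (hD : D.covBound CZ) (hβ : ‖β‖ ≤ Cβ) (hCβ : 0 ≤ Cβ)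
    {t : ℝ} (ht : t ∈ Set.Icc (0:ℝ) 1) (j : Fin n) :
    |⟪β, D.Z j t⟫| ≤ CZ * Cβ := by
  calc |⟪β, D.Z j t⟫| ≤ ‖β‖ * ‖D.Z j t‖ := abs_real_inner_le_norm _ _
    _ ≤ Cβ * CZ := mul_le_mul hβ (hD j t ht) (norm_nonneg _) hCβ
    _ = CZ * Cβ := mul_comm _ _

lemma exp_inner_le (hD : D.covBound CZ) (hβ : ‖β‖ ≤ Cβ) (hCβ : 0 ≤ Cβ)
    {t : ℝ} (ht : t ∈ Set.Icc (0:ℝ) 1) (j : Fin n) :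
    Real.exp ⟪β, D.Z j t⟫ ≤ Real.exp (CZ * Cβ) :=
  Real.exp_le_exp.2 ((le_abs_self _).trans (inner_abs_le hD hβ hCβ ht j))

lemma exp_inner_ge (hD : D.covBound CZ) (hβ : ‖β‖ ≤ Cβ) (hCβ : 0 ≤ Cβ)
    {t : ℝ} (ht : t ∈ Set.Icc (0:ℝ) 1) (j : Fin n) :
    Real.exp (-(CZ * Cβ)) ≤ Real.exp ⟪β, D.Z j t⟫ := by
  refine Real.exp_le_exp.2 ?_
  have := (abs_le.1 (inner_abs_le hD hβ hCβ ht j)).1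
  linarith

lemma S0_nonneg (D : SurvData n d) (β : EuclideanSpace ℝ (Fin d)) (t : ℝ) :
    0 ≤ D.S0 β t := by
  refine mul_nonneg (by positivity) (Finset.sum_nonneg fun j _ => ?_)
  split_ifs
  · exact (Real.exp_pos _).le
  · exact le_refl 0

lemma S0_lower (hD : D.covBound CZ) (hβ : ‖β‖ ≤ Cβ) (hCβ : 0 ≤ Cβ)
    {t : ℝ} (ht : t ∈ Set.Icc (0:ℝ) 1) :
    ((Finset.univ.filter fun j => t ≤ D.T j).card : ℝ) / n * Real.exp (-(CZ * Cβ))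
      ≤ D.S0 β t := by
  rw [SurvData.S0]
  have h : ∑ j, (if t ≤ D.T j then Real.exp (-(CZ * Cβ)) else 0)
      ≤ ∑ j, (if t ≤ D.T j then Real.exp ⟪β, D.Z j t⟫ else 0) := by
    refine Finset.sum_le_sum fun j _ => ?_
    split_ifs
    · exact exp_inner_ge hD hβ hCβ ht j
    · exact le_refl 0
  have h2 : ∑ j, (if t ≤ D.T j then Real.exp (-(CZ * Cβ)) else 0)
      = ((Finset.univ.filter fun j => t ≤ D.T j).card : ℝ) * Real.exp (-(CZ * Cβ)) := by
    rw [← Finset.sum_filter, Finset.sum_const, nsmul_eq_mul]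
  calc ((Finset.univ.filter fun j => t ≤ D.T j).card : ℝ) / n * Real.exp (-(CZ * Cβ))
      = (n:ℝ)⁻¹ * (((Finset.univ.filter fun j => t ≤ D.T j).card : ℝ) * Real.exp (-(CZ * Cβ))) := by
        ring
    _ ≤ _ := by
        rw [← h2]
        exact mul_le_mul_of_nonneg_left h (by positivity)

lemma S1_norm_le (hCZ : 0 ≤ CZ) (hD : D.covBound CZ) (hβ : ‖β‖ ≤ Cβ)
    {t : ℝ} (ht : t ∈ Set.Icc (0:ℝ) 1) :
    ‖D.S1 β t‖ ≤ CZ * D.S0 β t := by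
  rw [SurvData.S1, SurvData.S0, norm_smul, norm_inv, Real.norm_natCast]
  have key : ‖∑ j, if t ≤ D.T j then Real.exp ⟪β, D.Z j t⟫ • D.Z j t else 0‖
      ≤ ∑ j, (if t ≤ D.T j then CZ * Real.exp ⟪β, D.Z j t⟫ else 0) := by
    refine (norm_sum_le _ _).trans (Finset.sum_le_sum fun j _ => ?_)
    split_ifs
    · rw [norm_smul, Real.norm_eq_abs, Real.abs_exp, mul_comm CZ]
      exact mul_le_mul_of_nonneg_left (hD j t ht) (Real.exp_pos _).le
    · simp
  have h2 : ∑ j, (if t ≤ D.T j then CZ * Real.exp ⟪β, D.Z j t⟫ else 0)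
      = CZ * ∑ j, (if t ≤ D.T j then Real.exp ⟪β, D.Z j t⟫ else 0) := by
    rw [Finset.mul_sum]
    exact Finset.sum_congr rfl fun j _ => by split_ifs <;> simp
  calc (n:ℝ)⁻¹ * ‖∑ j, if t ≤ D.T j then Real.exp ⟪β, D.Z j t⟫ • D.Z j t else 0‖
      ≤ (n:ℝ)⁻¹ * (CZ * ∑ j, (if t ≤ D.T j then Real.exp ⟪β, D.Z j t⟫ else 0)) := by
        rw [← h2]; exact mul_le_mul_of_nonneg_left key (by positivity)
    _ = CZ * ((n:ℝ)⁻¹ * ∑ j, (if t ≤ D.T j then Real.exp ⟪β, D.Z j t⟫ else 0)) := by ring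

lemma Zbar_norm_le (hCZ : 0 ≤ CZ) (hD : D.covBound CZ) (hβ : ‖β‖ ≤ Cβ)
    {t : ℝ} (ht : t ∈ Set.Icc (0:ℝ) 1) :
    ‖D.Zbar β t‖ ≤ CZ := by
  rcases eq_or_lt_of_le (S0_nonneg D β t) with h0 | h0
  · have : ‖D.S1 β t‖ ≤ 0 := by
      have := S1_norm_le hCZ hD hβ ht
      rw [← h0] at this
      simpa using this
    have hs1 : D.S1 β t = 0 := norm_le_zero_iff.1 this
    rw [SurvData.Zbar, hs1, smul_zero, norm_zero]
    exact hCZ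
  · rw [SurvData.Zbar, norm_smul, norm_inv, Real.norm_eq_abs, abs_of_pos h0]
    rw [inv_mul_le_iff₀ h0]
    calc ‖D.S1 β t‖ ≤ CZ * D.S0 β t := S1_norm_le hCZ hD hβ ht
      _ = D.S0 β t * CZ := mul_comm _ _

lemma S0_sub (hD : D.covBound CZ) (hβ : ‖β‖ ≤ Cβ) (hCβ : 0 ≤ Cβ)
    {i0 : Fin n} (hZ : D.Z = D'.Z) (hT : ∀ j, j ≠ i0 → D.T j = D'.T j)
    {t : ℝ} (ht : t ∈ Set.Icc (0:ℝ) 1) :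
    |D.S0 β t - D'.S0 β t| ≤ Real.exp (CZ * Cβ) / n := by
  have hkey : (∑ j, if t ≤ D.T j then Real.exp ⟪β, D.Z j t⟫ else 0)
      - (∑ j, if t ≤ D'.T j then Real.exp ⟪β, D'.Z j t⟫ else 0)
      = (if t ≤ D.T i0 then Real.exp ⟪β, D.Z i0 t⟫ else 0)
      - (if t ≤ D'.T i0 then Real.exp ⟪β, D'.Z i0 t⟫ else 0) := by
    rw [← Finset.sum_sub_distrib]
    refine Finset.sum_eq_single_of_mem i0 (Finset.mem_univ _) fun j _ hj => ?_
    rw [hT j hj, hZ, sub_self]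
  have hb1 : 0 ≤ (if t ≤ D.T i0 then Real.exp ⟪β, D.Z i0 t⟫ else 0) ∧
      (if t ≤ D.T i0 then Real.exp ⟪β, D.Z i0 t⟫ else 0) ≤ Real.exp (CZ * Cβ) := by
    split_ifs
    · exact ⟨(Real.exp_pos _).le, exp_inner_le hD hβ hCβ ht i0⟩
    · exact ⟨le_refl _, (Real.exp_pos _).le⟩
  have hb2 : 0 ≤ (if t ≤ D'.T i0 then Real.exp ⟪β, D'.Z i0 t⟫ else 0) ∧
      (if t ≤ D'.T i0 then Real.exp ⟪β, D'.Z i0 t⟫ else 0) ≤ Real.exp (CZ * Cβ) := by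
    split_ifs
    · refine ⟨(Real.exp_pos _).le, ?_⟩
      rw [← hZ]
      exact exp_inner_le hD hβ hCβ ht i0
    · exact ⟨le_refl _, (Real.exp_pos _).le⟩
  have : D.S0 β t - D'.S0 β t = (n:ℝ)⁻¹ *
      ((if t ≤ D.T i0 then Real.exp ⟪β, D.Z i0 t⟫ else 0)
      - (if t ≤ D'.T i0 then Real.exp ⟪β, D'.Z i0 t⟫ else 0)) := by
    rw [SurvData.S0, SurvData.S0, ← mul_sub, hkey]
  rw [this, abs_mul, abs_inv, Nat.abs_cast, div_eq_inv_mul]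
  refine mul_le_mul_of_nonneg_left ?_ (by positivity)
  rw [abs_le]
  constructor <;> [linarith [hb1.1, hb2.2]; linarith [hb1.2, hb2.1]]

lemma S1_sub (hCZ : 0 ≤ CZ) (hD : D.covBound CZ) (hβ : ‖β‖ ≤ Cβ) (hCβ : 0 ≤ Cβ)
    {i0 : Fin n} (hZ : D.Z = D'.Z) (hT : ∀ j, j ≠ i0 → D.T j = D'.T j)
    {t : ℝ} (ht : t ∈ Set.Icc (0:ℝ) 1) :
    ‖D.S1 β t - D'.S1 β t‖ ≤ CZ * Real.exp (CZ * Cβ) / n := by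
  have hkey : (∑ j, if t ≤ D.T j then Real.exp ⟪β, D.Z j t⟫ • D.Z j t else 0)
      - (∑ j, if t ≤ D'.T j then Real.exp ⟪β, D'.Z j t⟫ • D'.Z j t else 0)
      = (if t ≤ D.T i0 then Real.exp ⟪β, D.Z i0 t⟫ • D.Z i0 t else 0)
      - (if t ≤ D'.T i0 then Real.exp ⟪β, D'.Z i0 t⟫ • D'.Z i0 t else 0) := by
    rw [← Finset.sum_sub_distrib]
    refine Finset.sum_eq_single_of_mem i0 (Finset.mem_univ _) fun j _ hj => ?_
    rw [hT j hj, hZ, sub_self]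
  have hterm : ‖(if t ≤ D.T i0 then Real.exp ⟪β, D.Z i0 t⟫ • D.Z i0 t else 0)
      - (if t ≤ D'.T i0 then Real.exp ⟪β, D'.Z i0 t⟫ • D'.Z i0 t else 0)‖
      ≤ CZ * Real.exp (CZ * Cβ) := by
    have hn1 : ‖Real.exp ⟪β, D.Z i0 t⟫ • D.Z i0 t‖ ≤ CZ * Real.exp (CZ * Cβ) := by
      rw [norm_smul, Real.norm_eq_abs, Real.abs_exp]
      calc Real.exp ⟪β, D.Z i0 t⟫ * ‖D.Z i0 t‖
          ≤ Real.exp (CZ * Cβ) * CZ :=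
            mul_le_mul (exp_inner_le hD hβ hCβ ht i0) (hD i0 t ht) (norm_nonneg _)
              (Real.exp_pos _).le
        _ = CZ * Real.exp (CZ * Cβ) := mul_comm _ _
    by_cases h1 : t ≤ D.T i0 <;> by_cases h2 : t ≤ D'.T i0
    · rw [if_pos h1, if_pos h2, ← hZ, sub_self, norm_zero]
      positivity
    · rw [if_pos h1, if_neg h2, sub_zero]
      exact hn1
    · rw [if_neg h1, if_pos h2, zero_sub, norm_neg, ← hZ]
      exact hn1
    · rw [if_neg h1, if_neg h2, sub_self, norm_zero]
      positivity
  have : D.S1 β t - D'.S1 β t = (n:ℝ)⁻¹ •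
      ((if t ≤ D.T i0 then Real.exp ⟪β, D.Z i0 t⟫ • D.Z i0 t else 0)
      - (if t ≤ D'.T i0 then Real.exp ⟪β, D'.Z i0 t⟫ • D'.Z i0 t else 0)) := by
    rw [SurvData.S1, SurvData.S1, ← smul_sub, hkey]
  rw [this, norm_smul, norm_inv, Real.norm_natCast, div_eq_inv_mul]
  exact mul_le_mul_of_nonneg_left hterm (by positivity)

lemma Zbar_sub (hCZ : 0 ≤ CZ) (hD : D.covBound CZ) (hD' : D'.covBound CZ)
    (hβ : ‖β‖ ≤ Cβ) (hCβ : 0 ≤ Cβ) (hn : 0 < n)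
    {i0 : Fin n} (hZ : D.Z = D'.Z) (hT : ∀ j, j ≠ i0 → D.T j = D'.T j)
    {i : Fin n} (hi : i ≠ i0) (ht : D.T i ∈ Set.Icc (0:ℝ) 1) :
    ‖D.Zbar β (D.T i) - D'.Zbar β (D.T i)‖ ≤
      2 * CZ * Real.exp (2 * (CZ * Cβ)) *
        ((Finset.univ.filter fun j => D.T i ≤ D.T j).card : ℝ)⁻¹ := by
  set t := D.T i with htdef
  set k : ℕ := (Finset.univ.filter fun j => t ≤ D.T j).card with hk
  set E : ℝ := Real.exp (CZ * Cβ) with hE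
  have hEpos : 0 < E := Real.exp_pos _
  have hk1 : 1 ≤ k :=
    Finset.card_pos.mpr ⟨i, Finset.mem_filter.mpr ⟨Finset.mem_univ _, le_refl _⟩⟩
  have hkpos : (0:ℝ) < k := by exact_mod_cast hk1
  have hnpos : (0:ℝ) < n := by exact_mod_cast hn
  set a := D.S0 β t with hadef
  set a' := D'.S0 β t with ha'def
  have ha : (k:ℝ)/n * Real.exp (-(CZ*Cβ)) ≤ a := S0_lower hD hβ hCβ ht
  have ha0 : 0 < a := lt_of_lt_of_le (by positivity) ha
  have ha' : 0 < a' := by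
    have hti : t ≤ D'.T i := le_of_eq (hT i hi)
    have hk' : 1 ≤ (Finset.univ.filter fun j => t ≤ D'.T j).card :=
      Finset.card_pos.mpr ⟨i, Finset.mem_filter.mpr ⟨Finset.mem_univ _, hti⟩⟩
    refine lt_of_lt_of_le ?_ (S0_lower hD' hβ hCβ ht)
    have h0 : (0:ℝ) < ((Finset.univ.filter fun j => t ≤ D'.T j).card : ℝ) := by
      exact_mod_cast hk'
    positivity
  have hid : D.Zbar β t - D'.Zbar β t =
      a⁻¹ • (D.S1 β t - D'.S1 β t) + (a⁻¹ - a'⁻¹) • D'.S1 β t := by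
    rw [SurvData.Zbar, SurvData.Zbar, smul_sub, sub_smul, ← hadef, ← ha'def]
    abel
  have h1 : ‖D.S1 β t - D'.S1 β t‖ ≤ CZ * E / n := S1_sub hCZ hD hβ hCβ hZ hT ht
  have h2 : |a - a'| ≤ E / n := S0_sub hD hβ hCβ hZ hT ht
  have h3 : ‖D'.S1 β t‖ ≤ CZ * a' := S1_norm_le hCZ hD' hβ ht
  have h4 : a⁻¹ ≤ (n:ℝ)/k * E := by
    have heq : ((k:ℝ)/n * Real.exp (-(CZ*Cβ)))⁻¹ = (n:ℝ)/k * E := by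
      rw [mul_inv, inv_div, Real.exp_neg, inv_inv, hE]
    rw [← heq]
    exact inv_anti₀ (by positivity) ha
  have habs : |a⁻¹ - a'⁻¹| = |a - a'| * (a⁻¹ * a'⁻¹) := by
    rw [abs_sub_comm a a', ← abs_of_pos (show (0:ℝ) < a⁻¹ * a'⁻¹ by positivity), ← abs_mul]
    congr 1
    field_simp
  calc ‖D.Zbar β t - D'.Zbar β t‖
      ≤ ‖a⁻¹ • (D.S1 β t - D'.S1 β t)‖ + ‖(a⁻¹ - a'⁻¹) • D'.S1 β t‖ := by
        rw [hid]; exact norm_add_le _ _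
    _ = a⁻¹ * ‖D.S1 β t - D'.S1 β t‖ + |a⁻¹ - a'⁻¹| * ‖D'.S1 β t‖ := by
        rw [norm_smul, norm_smul, Real.norm_eq_abs, Real.norm_eq_abs,
          abs_of_pos (inv_pos.mpr ha0)]
    _ ≤ a⁻¹ * (CZ * E / n) + (|a - a'| * (a⁻¹ * a'⁻¹)) * (CZ * a') := by
        rw [habs]
        gcongr
    _ = a⁻¹ * (CZ * E / n) + CZ * |a - a'| * a⁻¹ := by
        field_simp
    _ ≤ a⁻¹ * (CZ * E / n) + CZ * (E / n) * a⁻¹ := by gcongr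
    _ = (2 * CZ * E / n) * a⁻¹ := by ring
    _ ≤ (2 * CZ * E / n) * ((n:ℝ)/k * E) := by gcongr
    _ = 2 * CZ * (E * E) * (k:ℝ)⁻¹ := by field_simp
    _ = 2 * CZ * Real.exp (2 * (CZ * Cβ)) * (k:ℝ)⁻¹ := by
        rw [hE, ← Real.exp_add]; ring_nf

lemma rank_sum_le {ι : Type*} [DecidableEq ι] (f : ι → ℝ) (s : Finset ι) :
    ∑ i ∈ s, ((s.filter fun j => f i ≤ f j).card : ℝ)⁻¹ ≤ (harmonic s.card : ℝ) := by
  induction s using Finset.strongInductionOn with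
  | _ s ih =>
    rcases s.eq_empty_or_nonempty with rfl | hs
    · simp
    obtain ⟨m, hm, hmin⟩ := s.exists_min_image f hs
    have key := ih _ (Finset.erase_ssubset hm)
    rw [← Finset.add_sum_erase _ _ hm]
    have h1 : (s.filter fun j => f m ≤ f j) = s :=
      Finset.filter_true_of_mem fun j hj => hmin j hj
    have h2 : ∑ i ∈ s.erase m, ((s.filter fun j => f i ≤ f j).card : ℝ)⁻¹ ≤
        ∑ i ∈ s.erase m, (((s.erase m).filter fun j => f i ≤ f j).card : ℝ)⁻¹ := by
      refine Finset.sum_le_sum fun i hi => ?_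
      have hpos : 0 < (((s.erase m).filter fun j => f i ≤ f j).card : ℝ) := by
        have : 0 < ((s.erase m).filter fun j => f i ≤ f j).card :=
          Finset.card_pos.mpr ⟨i, Finset.mem_filter.mpr ⟨hi, le_refl _⟩⟩
        exact_mod_cast this
      have hle : (((s.erase m).filter fun j => f i ≤ f j).card : ℝ) ≤
          ((s.filter fun j => f i ≤ f j).card : ℝ) := by
        exact_mod_cast Finset.card_le_card (Finset.filter_subset_filter _ (s.erase_subset m))
      exact inv_anti₀ hpos hle
    have hcard : s.card = (s.erase m).card + 1 := by
      have h0 : 0 < s.card := Finset.card_pos.mpr hs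
      rw [Finset.card_erase_of_mem hm]
      omega
    rw [h1, hcard, harmonic_succ]
    push_cast
    have := h2.trans key
    linarith

lemma score_diff_le (hCZ : 1 ≤ CZ) (hCβ : 0 < Cβ) (hn : 2 ≤ n)
    (hβ : ‖β‖ ≤ Cβ) (hV : D.valid) (hV' : D'.valid)
    (hB : D.covBound CZ) (hB' : D'.covBound CZ) (hN : D.TimeNeighbor D') :
    ‖D.score β - D'.score β‖ ≤
      (4 * CZ + 6 * CZ * Real.exp (4 * CZ * Cβ) * Real.log (n + 1)) / n := by
  obtain ⟨hΔ, hZ, i0, hT⟩ := hN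
  have hCZ0 : (0:ℝ) ≤ CZ := le_trans zero_le_one hCZ
  have hCβ0 : 0 ≤ Cβ := hCβ.le
  have hn0 : 0 < n := by omega
  have hnpos : (0:ℝ) < n := by exact_mod_cast hn0
  set u : Fin n → EuclideanSpace ℝ (Fin d) :=
    fun i => if D.Δ i then D.Z i (D.T i) - D.Zbar β (D.T i) else 0 with hu
  set u' : Fin n → EuclideanSpace ℝ (Fin d) :=
    fun i => if D'.Δ i then D'.Z i (D'.T i) - D'.Zbar β (D'.T i) else 0 with hu'
  have hdiff : D.score β - D'.score β = (n:ℝ)⁻¹ • ∑ i, (u i - u' i) := by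
    rw [SurvData.score, SurvData.score, ← smul_sub, Finset.sum_sub_distrib]
  set K : ℝ := 2 * CZ * Real.exp (2 * (CZ * Cβ)) with hK
  have hK0 : 0 ≤ K := by positivity
  have hbound : ∀ i, i ≠ i0 → ‖u i - u' i‖ ≤
      K * ((Finset.univ.filter fun j => D.T i ≤ D.T j).card : ℝ)⁻¹ := by
    intro i hi
    have hrhs : (0:ℝ) ≤ K * ((Finset.univ.filter fun j => D.T i ≤ D.T j).card : ℝ)⁻¹ := by
      positivity
    have hrw : u' i = if D.Δ i then D.Z i (D.T i) - D'.Zbar β (D.T i) else 0 := by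
      simp only [hu', ← hΔ, ← hZ, ← hT i hi]
    cases hc : D.Δ i with
    | false => simp only [hu, hrw, hc, Bool.false_eq_true, if_false, sub_zero, norm_zero]; exact hrhs
    | true =>
      simp only [hu, hrw, hc, if_true]
      have heq : (D.Z i (D.T i) - D.Zbar β (D.T i)) - (D.Z i (D.T i) - D'.Zbar β (D.T i))
          = D'.Zbar β (D.T i) - D.Zbar β (D.T i) := by abel
      rw [heq, norm_sub_rev]
      exact Zbar_sub hCZ0 hB hB' hβ hCβ0 hn0 hZ hT hi (hV i)
  have hZb : ∀ (DD : SurvData n d), DD.covBound CZ → DD.valid →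
      ∀ i : Fin n, ‖(if DD.Δ i then DD.Z i (DD.T i) - DD.Zbar β (DD.T i) else 0 :
        EuclideanSpace ℝ (Fin d))‖ ≤ 2 * CZ := by
    intro DD hBB hVV i
    cases hc : DD.Δ i with
    | false => simp only [hc, Bool.false_eq_true, if_false, norm_zero]; positivity
    | true =>
      simp only [hc, if_true]
      calc ‖DD.Z i (DD.T i) - DD.Zbar β (DD.T i)‖
          ≤ ‖DD.Z i (DD.T i)‖ + ‖DD.Zbar β (DD.T i)‖ := norm_sub_le _ _
        _ ≤ CZ + CZ := add_le_add (hBB i _ (hVV i)) (Zbar_norm_le hCZ0 hBB hβ (hVV i))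
        _ = 2 * CZ := by ring
  have h_i0 : ‖u i0 - u' i0‖ ≤ 4 * CZ := by
    calc ‖u i0 - u' i0‖ ≤ ‖u i0‖ + ‖u' i0‖ := norm_sub_le _ _
      _ ≤ 2 * CZ + 2 * CZ := add_le_add (hZb D hB hV i0) (hZb D' hB' hV' i0)
      _ = 4 * CZ := by ring
  have hsum : ∑ i, ‖u i - u' i‖ ≤ 4 * CZ + K * (1 + Real.log n) := by
    rw [← Finset.add_sum_erase _ _ (Finset.mem_univ i0)]
    have hstep : ∑ i ∈ Finset.univ.erase i0, ‖u i - u' i‖ ≤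
        K * (1 + Real.log n) := by
      calc ∑ i ∈ Finset.univ.erase i0, ‖u i - u' i‖
          ≤ ∑ i ∈ Finset.univ.erase i0,
              K * ((Finset.univ.filter fun j => D.T i ≤ D.T j).card : ℝ)⁻¹ :=
            Finset.sum_le_sum fun i hi => hbound i (Finset.mem_erase.1 hi).1
        _ ≤ ∑ i, K * ((Finset.univ.filter fun j => D.T i ≤ D.T j).card : ℝ)⁻¹ :=
            Finset.sum_le_sum_of_subset_of_nonneg (Finset.erase_subset _ _)
              (fun i _ _ => by positivity)
        _ = K * ∑ i, ((Finset.univ.filter fun j => D.T i ≤ D.T j).card : ℝ)⁻¹ := by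
            rw [Finset.mul_sum]
        _ ≤ K * (harmonic n : ℝ) := by
            refine mul_le_mul_of_nonneg_left ?_ hK0
            have := rank_sum_le D.T Finset.univ
            rwa [Finset.card_univ, Fintype.card_fin] at this
        _ ≤ K * (1 + Real.log n) :=
            mul_le_mul_of_nonneg_left (harmonic_le_one_add_log n) hK0
    linarith
  have hnum : 4 * CZ + K * (1 + Real.log n) ≤
      4 * CZ + 6 * CZ * Real.exp (4 * CZ * Cβ) * Real.log (n + 1) := by
    have hA : (0:ℝ) ≤ CZ * Cβ := by positivity
    have he : Real.exp (2 * (CZ * Cβ)) ≤ Real.exp (4 * CZ * Cβ) :=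
      Real.exp_le_exp.2 (by nlinarith)
    have he0 : 0 < Real.exp (4 * CZ * Cβ) := Real.exp_pos _
    have hlog1 : 1 ≤ Real.log ((n:ℝ) + 1) := by
      have h3 : (3:ℝ) ≤ (n:ℝ) + 1 := by
        have : (2:ℝ) ≤ (n:ℝ) := by exact_mod_cast hn
        linarith
      calc (1:ℝ) = Real.log (Real.exp 1) := (Real.log_exp 1).symm
        _ ≤ Real.log ((n:ℝ) + 1) := by
            apply Real.log_le_log (Real.exp_pos 1)
            have := Real.exp_one_lt_d9
            linarith
    have hlogmono : Real.log n ≤ Real.log ((n:ℝ) + 1) :=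
      Real.log_le_log hnpos (by linarith)
    have hlogn0 : 0 ≤ Real.log n := Real.log_nonneg (by exact_mod_cast hn0)
    have hkey : K * (1 + Real.log n) ≤ 6 * CZ * Real.exp (4 * CZ * Cβ) * Real.log (n + 1) := by
      rw [hK]
      calc 2 * CZ * Real.exp (2 * (CZ * Cβ)) * (1 + Real.log n)
          ≤ 2 * CZ * Real.exp (4 * CZ * Cβ) * (2 * Real.log ((n:ℝ) + 1)) := by
            have h1 : (0:ℝ) ≤ 1 + Real.log n := by linarith
            have h2 : 1 + Real.log n ≤ 2 * Real.log ((n:ℝ) + 1) := by linarith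
            have := mul_le_mul (mul_le_mul_of_nonneg_left he (by linarith : (0:ℝ) ≤ 2 * CZ))
              h2 h1 (by positivity)
            linarith [this]
        _ ≤ 6 * CZ * Real.exp (4 * CZ * Cβ) * Real.log ((n:ℝ) + 1) := by
            nlinarith [mul_nonneg (mul_nonneg hCZ0 he0.le) (by linarith : (0:ℝ) ≤ Real.log ((n:ℝ) + 1))]
    linarith
  calc ‖D.score β - D'.score β‖
      = (n:ℝ)⁻¹ * ‖∑ i, (u i - u' i)‖ := by
        rw [hdiff, norm_smul, norm_inv, Real.norm_natCast]
    _ ≤ (n:ℝ)⁻¹ * ∑ i, ‖u i - u' i‖ :=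
      mul_le_mul_of_nonneg_left (norm_sum_le _ _) (by positivity)
    _ ≤ (n:ℝ)⁻¹ * (4 * CZ + 6 * CZ * Real.exp (4 * CZ * Cβ) * Real.log (n + 1)) :=
      mul_le_mul_of_nonneg_left (hsum.trans hnum) (by positivity)
    _ = (4 * CZ + 6 * CZ * Real.exp (4 * CZ * Cβ) * Real.log (n + 1)) / n := by
        rw [inv_mul_eq_div]

lemma S0_zero_eq (D : SurvData n d) (t : ℝ) :
    D.S0 0 t = (n:ℝ)⁻¹ * ((Finset.univ.filter fun j => t ≤ D.T j).card : ℝ) := by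
  rw [SurvData.S0]
  congr 1
  have h : ∀ j : Fin n,
      (if t ≤ D.T j then Real.exp ⟪(0:EuclideanSpace ℝ (Fin d)), D.Z j t⟫ else 0)
      = (if t ≤ D.T j then (1:ℝ) else 0) := fun j => by
    simp [inner_zero_left]
  rw [Finset.sum_congr rfl fun j _ => h j, Finset.sum_boole]

lemma inner_S1_zero (D : SurvData n d) (x : EuclideanSpace ℝ (Fin d)) (t : ℝ) :
    ⟪x, D.S1 0 t⟫ = (n:ℝ)⁻¹ * ∑ j, (if t ≤ D.T j then ⟪x, D.Z j t⟫ else 0) := by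
  rw [SurvData.S1, real_inner_smul_right, inner_sum]
  congr 1
  refine Finset.sum_congr rfl fun j _ => ?_
  by_cases h : t ≤ D.T j
  · rw [if_pos h, if_pos h]
    simp [real_inner_smul_right, inner_zero_left]
  · rw [if_neg h, if_neg h, inner_zero_right]

lemma inner_score_zero (D : SurvData n d) (x : EuclideanSpace ℝ (Fin d))
    (hΔ : ∀ i, D.Δ i = true) :
    ⟪x, D.score 0⟫ = (n:ℝ)⁻¹ *
      ∑ i, (⟪x, D.Z i (D.T i)⟫ - (D.S0 0 (D.T i))⁻¹ * ⟪x, D.S1 0 (D.T i)⟫) := by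
  rw [SurvData.score, real_inner_smul_right, inner_sum]
  congr 1
  refine Finset.sum_congr rfl fun i _ => ?_
  rw [if_pos (hΔ i), inner_sub_right, SurvData.Zbar, real_inner_smul_right]

def lbD (CZ : ℝ) (m e : ℕ) : SurvData (m+2) (e+1) :=
  ⟨fun i => ((i:ℕ)+1:ℝ)/(m+2), fun _ => true,
   fun i _ => if i = Fin.last (m+1) then CZ • EuclideanSpace.single 0 (1:ℝ) else 0⟩

def lbD' (CZ : ℝ) (m e : ℕ) : SurvData (m+2) (e+1) :=
  ⟨fun i => if i = Fin.last (m+1) then 0 else ((i:ℕ)+1:ℝ)/(m+2), fun _ => true,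
   fun i _ => if i = Fin.last (m+1) then CZ • EuclideanSpace.single 0 (1:ℝ) else 0⟩

lemma harmonic_real (N : ℕ) :
    (harmonic N : ℝ) = ∑ k ∈ Finset.range N, ((k:ℝ)+1)⁻¹ := by
  rw [harmonic]
  push_cast
  rfl

lemma sum_inv_reflect (N : ℕ) :
    ∑ i : Fin N, ((N:ℝ) - (i:ℕ))⁻¹ = (harmonic N : ℝ) := by
  rw [harmonic_real]
  rw [Fin.sum_univ_eq_sum_range (fun k => ((N:ℝ) - (k:ℕ))⁻¹) N]
  rw [← Finset.sum_range_reflect (fun k => ((k:ℝ)+1)⁻¹) N]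
  refine Finset.sum_congr rfl fun j hj => ?_
  have hjN : j < N := Finset.mem_range.1 hj
  congr 1
  have h1 : N - 1 - j = N - (j+1) := by omega
  rw [h1, Nat.cast_sub (by omega : j + 1 ≤ N)]
  push_cast
  ring

lemma lb_main (CZ : ℝ) (hCZ : 1 ≤ CZ) (m e : ℕ) :
    CZ / 4 * Real.log ((m+2 : ℕ) : ℝ) / ((m+2 : ℕ) : ℝ) ≤
      ‖(lbD CZ m e).score 0 - (lbD' CZ m e).score 0‖ := by
  set c : ℝ := (m:ℝ) + 2 with hc
  have hcast : ((m+2 : ℕ) : ℝ) = c := by push_cast; ring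
  have hcpos : (0:ℝ) < c := by positivity
  have hc2 : (2:ℝ) ≤ c := by simp [hc]
  set L : Fin (m+2) := Fin.last (m+1) with hLdef
  set e1 : EuclideanSpace ℝ (Fin (e+1)) := EuclideanSpace.single 0 (1:ℝ) with he1
  have he1i : ⟪e1, e1⟫ = 1 := by
    rw [he1, real_inner_self_eq_norm_sq, EuclideanSpace.norm_single, norm_one, one_pow]
  have he1n : ‖e1‖ = 1 := by rw [he1, EuclideanSpace.norm_single, norm_one]
  have hZeq : (lbD' CZ m e).Z = (lbD CZ m e).Z := rfl
  have hiZ : ∀ (j : Fin (m+2)) (t : ℝ),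
      ⟪e1, (lbD CZ m e).Z j t⟫ = if j = L then CZ else 0 := by
    intro j t
    show ⟪e1, if j = L then CZ • e1 else 0⟫ = _
    by_cases h : j = L
    · rw [if_pos h, if_pos h, real_inner_smul_right, he1i, mul_one]
    · rw [if_neg h, if_neg h, inner_zero_right]
  have hT : ∀ i : Fin (m+2), (lbD CZ m e).T i = ((i:ℕ) + 1 : ℝ)/c := fun i => rfl
  have hT' : ∀ i : Fin (m+2),
      (lbD' CZ m e).T i = if i = L then 0 else ((i:ℕ) + 1 : ℝ)/c := fun i => rfl
  have hiR : ∀ i : Fin (m+2), ((i:ℕ) : ℝ) < c := by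
    intro i
    have := i.isLt
    rw [hc]
    push_cast
    exact_mod_cast by exact_mod_cast Nat.cast_lt.mpr this
  have hTpos : ∀ i : Fin (m+2), 0 < (lbD CZ m e).T i := by
    intro i; rw [hT]; positivity
  have hTle1 : ∀ i : Fin (m+2), (lbD CZ m e).T i ≤ 1 := by
    intro i
    rw [hT, div_le_one hcpos]
    have hnat : (i:ℕ) + 1 ≤ m + 2 := i.isLt
    have : ((i:ℕ):ℝ) + 1 ≤ c := by rw [hc]; exact_mod_cast hnat
    linarith
  have hTL : (lbD CZ m e).T L = 1 := by
    rw [hT]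
    have : ((L:ℕ) : ℝ) = (m:ℝ) + 1 := by rw [hLdef]; push_cast [Fin.val_last]; ring
    rw [this, hc]
    rw [div_eq_one_iff_eq (by positivity)]
    ring
  -- S0 and S1 for lbD at event times
  have hcond : ∀ i j : Fin (m+2), ((lbD CZ m e).T i ≤ (lbD CZ m e).T j ↔ i ≤ j) := by
    intro i j
    rw [hT, hT, div_le_div_iff_of_pos_right hcpos]
    constructor
    · intro h
      have : ((i:ℕ):ℝ) ≤ ((j:ℕ):ℝ) := by linarith
      exact_mod_cast this
    · intro h
      have : ((i:ℕ):ℝ) ≤ ((j:ℕ):ℝ) := by exact_mod_cast h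
      linarith
  have hS0i : ∀ i : Fin (m+2),
      (lbD CZ m e).S0 0 ((lbD CZ m e).T i) = (c - (i:ℕ))/c := by
    intro i
    rw [S0_zero_eq]
    have hfil : (Finset.univ.filter fun j => (lbD CZ m e).T i ≤ (lbD CZ m e).T j)
        = Finset.Ici i := by
      ext j
      simp [Finset.mem_Ici, hcond i j]
    rw [hfil, Fin.card_Ici, hcast]
    rw [Nat.cast_sub (by omega : (i:ℕ) ≤ m + 2), hcast]
    rw [inv_mul_eq_div]
  have hS1i : ∀ i : Fin (m+2),
      ⟪e1, (lbD CZ m e).S1 0 ((lbD CZ m e).T i)⟫ = c⁻¹ * CZ := by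
    intro i
    rw [inner_S1_zero, hcast]
    congr 1
    rw [Finset.sum_congr rfl fun j _ => by rw [hiZ]]
    rw [Finset.sum_eq_single L]
    · rw [if_pos (by rw [hTL]; exact hTle1 i), if_pos rfl]
    · intro j _ hj
      rw [if_neg hj, ite_self]
    · intro h
      exact absurd (Finset.mem_univ L) h
  -- score of lbD
  have hA : ⟪e1, (lbD CZ m e).score 0⟫ = c⁻¹ * (CZ - CZ * (harmonic (m+2) : ℝ)) := by
    rw [inner_score_zero _ _ (fun i => rfl), hcast]
    congr 1
    have hterm : ∀ i : Fin (m+2),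
        ⟪e1, (lbD CZ m e).Z i ((lbD CZ m e).T i)⟫ -
          ((lbD CZ m e).S0 0 ((lbD CZ m e).T i))⁻¹ *
            ⟪e1, (lbD CZ m e).S1 0 ((lbD CZ m e).T i)⟫
        = (if i = L then CZ else 0) - CZ * (c - (i:ℕ))⁻¹ := by
      intro i
      rw [hiZ, hS0i, hS1i]
      congr 1
      have hne : c - ((i:ℕ):ℝ) ≠ 0 := by have := hiR i; linarith
      rw [inv_div]
      field_simp
    rw [Finset.sum_congr rfl fun i _ => hterm i, Finset.sum_sub_distrib]
    rw [Finset.sum_ite_eq' Finset.univ L (fun _ => CZ), if_pos (Finset.mem_univ L)]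
    congr 1
    rw [← Finset.mul_sum]
    congr 1
    have := sum_inv_reflect (m+2)
    rw [hcast] at this
    exact this
  -- score of lbD'
  have hB : ⟪e1, (lbD' CZ m e).score 0⟫ = c⁻¹ * (CZ - c⁻¹ * CZ) := by
    rw [inner_score_zero _ _ (fun i => rfl), hcast]
    congr 1
    rw [Finset.sum_eq_single L]
    · -- i = L : t = 0
      have htL : (lbD' CZ m e).T L = 0 := by rw [hT', if_pos rfl]
      have hS0L : (lbD' CZ m e).S0 0 ((lbD' CZ m e).T L) = 1 := by
        rw [htL, S0_zero_eq, hcast]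
        have hfil : (Finset.univ.filter fun j => (0:ℝ) ≤ (lbD' CZ m e).T j)
            = Finset.univ := by
          refine Finset.filter_true_of_mem fun j _ => ?_
          rw [hT']
          split_ifs
          · exact le_refl 0
          · positivity
        rw [hfil, Finset.card_univ, Fintype.card_fin, hcast, inv_mul_cancel₀ (ne_of_gt hcpos)]
      have hS1L : ⟪e1, (lbD' CZ m e).S1 0 ((lbD' CZ m e).T L)⟫ = c⁻¹ * CZ := by
        rw [htL, inner_S1_zero, hcast]
        congr 1
        rw [Finset.sum_congr rfl fun j _ => by rw [hZeq, hiZ]]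
        rw [Finset.sum_eq_single L]
        · rw [if_pos (le_of_eq htL.symm), if_pos rfl]
        · intro j _ hj
          rw [if_neg hj, ite_self]
        · intro h
          exact absurd (Finset.mem_univ L) h
      rw [hS0L, hS1L, hZeq, hiZ, if_pos rfl, inv_one, one_mul]
    · -- i ≠ L : term = 0
      intro i _ hi
      have hti : (lbD' CZ m e).T i = ((i:ℕ)+1:ℝ)/c := by rw [hT', if_neg hi]
      have hZ0 : ⟪e1, (lbD' CZ m e).Z i ((lbD' CZ m e).T i)⟫ = 0 := by
        rw [hZeq, hiZ, if_neg hi]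
      have hS10 : ⟪e1, (lbD' CZ m e).S1 0 ((lbD' CZ m e).T i)⟫ = 0 := by
        rw [inner_S1_zero]
        have hsum0 : ∑ j, (if (lbD' CZ m e).T i ≤ (lbD' CZ m e).T j
            then ⟪e1, (lbD' CZ m e).Z j ((lbD' CZ m e).T i)⟫ else 0) = 0 := by
          refine Finset.sum_eq_zero fun j _ => ?_
          by_cases hj : j = L
          · subst hj
            have hTL0 : (lbD' CZ m e).T L = 0 := by rw [hT', if_pos rfl]
            rw [hti, hTL0, if_neg (by rw [not_le]; positivity)]
          · rw [hZeq, hiZ, if_neg hj, ite_self]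
        rw [hsum0, mul_zero]
      rw [hZ0, hS10, mul_zero, sub_zero]
    · intro h
      exact absurd (Finset.mem_univ L) h
  -- combine
  set H : ℝ := (harmonic (m+2) : ℝ) with hH
  have hHlb : Real.log (c + 1) ≤ H := by
    have := log_add_one_le_harmonic (m+2)
    rw [hH]
    convert this using 2
    push_cast
    ring
  have hlog1 : (1:ℝ) ≤ Real.log (c + 1) := by
    calc (1:ℝ) = Real.log (Real.exp 1) := (Real.log_exp 1).symm
      _ ≤ Real.log (c + 1) := by
          apply Real.log_le_log (Real.exp_pos 1)
          have := Real.exp_one_lt_d9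
          linarith
  have hH1 : (1:ℝ) ≤ H := le_trans hlog1 hHlb
  have hcinv : c⁻¹ ≤ 1/2 := by
    rw [inv_le_comm₀ hcpos (by norm_num)]
    linarith
  have hinner : ⟪e1, (lbD CZ m e).score 0 - (lbD' CZ m e).score 0⟫
      = -(c⁻¹ * (CZ * (H - c⁻¹))) := by
    rw [inner_sub_right, hA, hB, hH]
    ring
  have hnn : 0 ≤ c⁻¹ * (CZ * (H - c⁻¹)) := by
    have h1 : 0 ≤ H - c⁻¹ := by linarith
    positivity
  have hlower : c⁻¹ * (CZ * (H - c⁻¹)) ≤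
      ‖(lbD CZ m e).score 0 - (lbD' CZ m e).score 0‖ := by
    have habs := abs_real_inner_le_norm e1 ((lbD CZ m e).score 0 - (lbD' CZ m e).score 0)
    rw [hinner, abs_neg, abs_of_nonneg hnn, he1n, one_mul] at habs
    exact habs
  refine le_trans ?_ hlower
  rw [hcast]
  have hlogc2 : Real.log 2 ≤ Real.log c := Real.log_le_log (by norm_num) hc2
  have hl2 := Real.log_two_gt_d9
  have hmono : Real.log c ≤ Real.log (c + 1) := Real.log_le_log hcpos (by linarith)
  have hkey : Real.log c / 4 ≤ H - c⁻¹ := by linarith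
  calc CZ / 4 * Real.log c / c = c⁻¹ * (CZ * (Real.log c / 4)) := by ring
    _ ≤ c⁻¹ * (CZ * (H - c⁻¹)) := by
        refine mul_le_mul_of_nonneg_left ?_ (by positivity)
        exact mul_le_mul_of_nonneg_left hkey (by linarith)

lemma lb_props (CZ : ℝ) (hCZ : 1 ≤ CZ) (m e : ℕ) :
    (lbD CZ m e).valid ∧ (lbD' CZ m e).valid ∧ (lbD CZ m e).covBound CZ ∧
    (lbD' CZ m e).covBound CZ ∧ (lbD CZ m e).TimeNeighbor (lbD' CZ m e) := by
  have hcpos : (0:ℝ) < (m:ℝ) + 2 := by positivity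
  have hTmem : ∀ i : Fin (m+2), (((i:ℕ):ℝ) + 1)/((m:ℝ)+2) ∈ Set.Icc (0:ℝ) 1 := by
    intro i
    constructor
    · positivity
    · rw [div_le_one hcpos]
      have hnat : (i:ℕ) + 1 ≤ m + 2 := i.isLt
      have : ((i:ℕ):ℝ) + 1 ≤ (m:ℝ) + 2 := by exact_mod_cast hnat
      linarith
  have hcov : ∀ (i : Fin (m+2)) (t : ℝ),
      ‖(if i = Fin.last (m+1) then CZ • EuclideanSpace.single (0 : Fin (e+1)) (1:ℝ)
        else 0)‖ ≤ CZ := by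
    intro i t
    split_ifs
    · rw [norm_smul, Real.norm_eq_abs, EuclideanSpace.norm_single, norm_one, mul_one,
        abs_of_nonneg (by linarith)]
    · rw [norm_zero]; linarith
  refine ⟨fun i => hTmem i, ?_, fun i t _ => hcov i t, fun i t _ => hcov i t, ?_⟩
  · intro i
    show (if i = Fin.last (m+1) then (0:ℝ) else _) ∈ _
    split_ifs
    · exact ⟨le_refl 0, zero_le_one⟩
    · exact hTmem i
  · refine ⟨rfl, rfl, Fin.last (m+1), fun i hi => ?_⟩
    show _ = if i = Fin.last (m+1) then (0:ℝ) else _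
    rw [if_neg hi]
    rfl

end CoxAux

/-- Lemma B.1 (Case 3): the sensitivity of the Cox score with respect to a single
observed time is of exact order `log n / n`. -/
theorem cox_score_time_sensitivity (CZ Cβ : ℝ) (hCZ : 1 ≤ CZ) (hCβ : 0 < Cβ) :
    (∀ (n d : ℕ), 2 ≤ n → 1 ≤ d → ∀ β : EuclideanSpace ℝ (Fin d), ‖β‖ ≤ Cβ →
      ∀ D D' : SurvData n d, D.valid → D'.valid → D.covBound CZ → D'.covBound CZ →
        SurvData.TimeNeighbor D D' →
        ‖D.score β - D'.score β‖ ≤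
          (4 * CZ + 6 * CZ * Real.exp (4 * CZ * Cβ) * Real.log (n + 1)) / n) ∧
    (∃ c : ℝ, 0 < c ∧ ∀ (n d : ℕ), 2 ≤ n → 1 ≤ d →
      ∃ (β : EuclideanSpace ℝ (Fin d)) (D D' : SurvData n d),
        ‖β‖ ≤ Cβ ∧ D.valid ∧ D'.valid ∧ D.covBound CZ ∧ D'.covBound CZ ∧
        SurvData.TimeNeighbor D D' ∧
        c * Real.log n / n ≤ ‖D.score β - D'.score β‖) := by
  constructor
  · intro n d hn hd β hβ D D' hV hV' hB hB' hN
    exact CoxAux.score_diff_le hCZ hCβ hn hβ hV hV' hB hB' hN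
  · refine ⟨CZ/4, by linarith, ?_⟩
    intro n d hn hd
    obtain ⟨m, rfl⟩ : ∃ m, n = m + 2 := ⟨n - 2, by omega⟩
    obtain ⟨e, rfl⟩ : ∃ e, d = e + 1 := ⟨d - 1, by omega⟩
    obtain ⟨hV, hV', hB, hB', hN⟩ := CoxAux.lb_props CZ hCZ m e
    exact ⟨0, CoxAux.lbD CZ m e, CoxAux.lbD' CZ m e,
      by rw [norm_zero]; exact hCβ.le, hV, hV', hB, hB', hN,
      CoxAux.lb_main CZ hCZ m e⟩
end
end

section
/- Deterministic localization of the constrained maximum partial-likelihood estimator (key step in the proof of Lemma B.2): Let C_Z > 0 and C_β > 0, and let D be a survival dataset of size n ≥ 2 satisfying the covariate bound C_Z. Let β₀ ∈ ℝ^d with ‖β₀‖₂ ≤ C_β, and let β̂ be any maximizer of the log partial likelihood ℓ(·;D) over the closed Euclidean ball B̄(0, C_β). Set λ := λ_min(H(β₀;D)) and g := ‖ℓ̇(β₀;D)‖₂. If λ > 0 and g/λ < (log 2)/(4 C_Z), then ‖β̂ − β₀‖₂ ≤ 2 g / λ. -/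
open scoped BigOperators
open MeasureTheory Real
open scoped RealInnerProductSpace
noncomputable section

namespace SurvData

variable {n d : ℕ}

def S2mat (D : SurvData n d) (β : EuclideanSpace ℝ (Fin d)) (t : ℝ) :
    Matrix (Fin d) (Fin d) ℝ :=
  (n : ℝ)⁻¹ • ∑ j, if t ≤ D.T j then
    Real.exp ⟪β, D.Z j t⟫ • Matrix.of (fun k l => D.Z j t k * D.Z j t l) else 0

def Vmat (D : SurvData n d) (β : EuclideanSpace ℝ (Fin d)) (t : ℝ) :
    Matrix (Fin d) (Fin d) ℝ :=
  (D.S0 β t)⁻¹ • D.S2mat β t - Matrix.of (fun k l => D.Zbar β t k * D.Zbar β t l)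

/-- The information matrix `H(β; D)`, i.e. minus the Hessian of the log partial
likelihood. -/
def infoMat (D : SurvData n d) (β : EuclideanSpace ℝ (Fin d)) :
    Matrix (Fin d) (Fin d) ℝ :=
  (n : ℝ)⁻¹ • ∑ i, if D.Δ i then D.Vmat β (D.T i) else 0


/-- The log partial likelihood `ℓ(β; D)`. -/
def loglik (D : SurvData n d) (β : EuclideanSpace ℝ (Fin d)) : ℝ :=
  (n : ℝ)⁻¹ * ∑ i, if D.Δ i then
    ⟪β, D.Z i (D.T i)⟫ -
      Real.log (∑ j, if D.T i ≤ D.T j then Real.exp ⟪β, D.Z j (D.T i)⟫ else 0)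
  else 0

end SurvData

/-!
Write `δ = β̂ - β₀`. Along the segment `u ↦ β₀ + u • δ` the log partial likelihood has derivative
`⟪ℓ̇, δ⟫` and second derivative `-δᵀ H δ`, and for each event `δᵀ V δ` is the variance of
`⟪δ, Z_j⟫` under the risk-set weights `exp ⟪β, Z_j⟫`. Moving by `u` exponentially tilts these weights
by factors within `exp (± u C_Z ‖δ‖)`, so the variance drops by at most `exp (-2 u C_Z ‖δ‖)`: as long
as `2 C_Z u ‖δ‖ ≤ log 2` the curvature stays above `λ ‖δ‖² / 2`. If `‖δ‖ > 2 g / λ`, pick a distance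
`r ∈ (2 g / λ, ‖δ‖)` with `2 C_Z r < log 2`; maximality of `β̂` and concavity make the slope at
distance `r` nonnegative, so the slope `⟪ℓ̇(β₀), δ⟫ ≤ g ‖δ‖` at `0` is at least `λ ‖δ‖ r / 2 > g ‖δ‖`.
-/

open Matrix

theorem Matrix.IsHermitian.iInf_eigenvalues_mul_dotProduct_self_le {ι : Type*} [Fintype ι]
    [DecidableEq ι] {A : Matrix ι ι ℝ} (hA : A.IsHermitian) (v : ι → ℝ) :
    (⨅ i, hA.eigenvalues i) * (v ⬝ᵥ v) ≤ v ⬝ᵥ A *ᵥ v := by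
  set c := ⨅ i, hA.eigenvalues i
  set U := (hA.eigenvectorUnitary : Matrix ι ι ℝ)
  have hshift : A - c • 1 = U * diagonal (fun i => hA.eigenvalues i - c) * star U := by
    have hdiag : diagonal (fun i => hA.eigenvalues i - c) =
        diagonal (RCLike.ofReal ∘ hA.eigenvalues) - c • 1 := by
      ext i j; by_cases h : i = j <;> simp [diagonal, h]
    conv_lhs => rw [hA.spectral_theorem, Unitary.conjStarAlgAut_apply]
    rw [hdiag, mul_sub, sub_mul, mul_smul_comm, mul_one, smul_mul_assoc,
      Unitary.mul_star_self_of_mem hA.eigenvectorUnitary.prop]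
  have hpsd : (A - c • 1).PosSemidef := by
    rw [hshift, Unitary.isUnit_coe.posSemidef_star_right_conjugate_iff, posSemidef_diagonal_iff]
    exact fun i => sub_nonneg.2 (ciInf_le (Set.finite_range _).bddBelow i)
  simpa [sub_mulVec, smul_mulVec, dotProduct_sub, dotProduct_smul] using
    hpsd.dotProduct_mulVec_nonneg v

theorem Antitone.nonneg_of_hasDerivAt_of_le {f s : ℝ → ℝ} (hf : ∀ u, HasDerivAt f (s u) u)
    (hs : Antitone s) {a b : ℝ} (hab : a < b) (hle : f a ≤ f b) : 0 ≤ s a := by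
  obtain ⟨c, hc, hslope⟩ := exists_hasDerivAt_eq_slope f s hab
    (fun x _ => (hf x).continuousAt.continuousWithinAt) (fun x _ => hf x)
  calc 0 ≤ (f b - f a) / (b - a) := div_nonneg (sub_nonneg.2 hle) (sub_nonneg.2 hab.le)
    _ = s c := hslope.symm
    _ ≤ s a := hs hc.1.le

theorem mul_le_slope_zero_of_concave {f s q : ℝ → ℝ} (hf : ∀ u, HasDerivAt f (s u) u)
    (hs : ∀ u, HasDerivAt s (-q u) u) (hq : ∀ u, 0 ≤ q u) {t b m : ℝ} (ht₀ : 0 < t) (htb : t < b)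
    (hle : f t ≤ f b) (hm : ∀ u ∈ Set.Icc 0 t, m ≤ q u) : m * t ≤ s 0 := by
  have hanti : Antitone s := antitone_of_hasDerivAt_nonpos hs fun u => neg_nonpos.2 (hq u)
  have hst : 0 ≤ s t := hanti.nonneg_of_hasDerivAt_of_le hf htb hle
  have hdrop : s t - s 0 ≤ -m * (t - 0) := by
    refine (convex_Icc 0 t).image_sub_le_mul_sub_of_deriv_le
      (fun u _ => (hs u).continuousAt.continuousWithinAt)
      (fun u _ => (hs u).differentiableAt.differentiableWithinAt) (fun u hu => ?_)
      0 (Set.left_mem_Icc.2 ht₀.le) t (Set.right_mem_Icc.2 ht₀.le) ht₀.le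
    rw [(hs u).deriv, neg_le_neg_iff]
    exact hm u (interior_subset hu)
  linarith

section WeightedMoments

variable {ι : Type*} [Fintype ι]

def weightedMean (w x : ι → ℝ) : ℝ := (∑ j, w j * x j) / ∑ j, w j

def weightedVar (w x : ι → ℝ) : ℝ := (∑ j, w j * x j ^ 2) / (∑ j, w j) - weightedMean w x ^ 2

theorem weightedVar_add_sq {w : ι → ℝ} (x : ι → ℝ) (hW : ∑ j, w j ≠ 0) (μ : ℝ) :
    weightedVar w x + (weightedMean w x - μ) ^ 2 = (∑ j, w j * (x j - μ) ^ 2) / ∑ j, w j := by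
  have hexpand : ∑ j, w j * (x j - μ) ^ 2 =
      ∑ j, w j * x j ^ 2 - 2 * μ * ∑ j, w j * x j + μ ^ 2 * ∑ j, w j := by
    simp only [Finset.mul_sum, ← Finset.sum_sub_distrib, ← Finset.sum_add_distrib]
    exact Finset.sum_congr rfl fun j _ => by ring
  rw [hexpand, weightedVar, weightedMean]
  field_simp
  ring

theorem weightedVar_le {w : ι → ℝ} (x : ι → ℝ) (hW : ∑ j, w j ≠ 0) (μ : ℝ) :
    weightedVar w x ≤ (∑ j, w j * (x j - μ) ^ 2) / ∑ j, w j := by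
  rw [← weightedVar_add_sq x hW μ]
  exact le_add_of_nonneg_right (sq_nonneg _)

theorem weightedVar_eq {w : ι → ℝ} (x : ι → ℝ) (hW : ∑ j, w j ≠ 0) :
    weightedVar w x = (∑ j, w j * (x j - weightedMean w x) ^ 2) / ∑ j, w j := by
  rw [← weightedVar_add_sq x hW, sub_self, zero_pow two_ne_zero, add_zero]

theorem weightedVar_nonneg {w : ι → ℝ} (x : ι → ℝ) (hw : 0 ≤ w) : 0 ≤ weightedVar w x := by
  by_cases hW : ∑ j, w j = 0
  · simp [weightedVar, weightedMean, hW]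
  rw [weightedVar_eq x hW]
  exact div_nonneg (Finset.sum_nonneg fun j _ => mul_nonneg (hw j) (sq_nonneg _))
    (Finset.sum_nonneg fun j _ => hw j)

/-- Comparing both variances with the spread of `x` around the `w'`-mean: the numerator shrinks
by at most `a` and the total weight grows by at most `b`. -/
theorem div_mul_weightedVar_le {w w' : ι → ℝ} (x : ι → ℝ) {a b : ℝ} (ha : 0 < a)
    (hw : 0 ≤ w) (hW : 0 < ∑ j, w j) (hlow : ∀ j, a * w j ≤ w' j) (hhigh : ∀ j, w' j ≤ b * w j) :
    a / b * weightedVar w x ≤ weightedVar w' x := by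
  have hsum_low : a * ∑ j, w j ≤ ∑ j, w' j := by
    rw [Finset.mul_sum]; exact Finset.sum_le_sum fun j _ => hlow j
  have hsum_high : ∑ j, w' j ≤ b * ∑ j, w j := by
    rw [Finset.mul_sum]; exact Finset.sum_le_sum fun j _ => hhigh j
  have hW' : 0 < ∑ j, w' j := lt_of_lt_of_le (mul_pos ha hW) hsum_low
  have hb : 0 < b := pos_of_mul_pos_left (hW'.trans_le hsum_high) hW.le
  set μ := weightedMean w' x
  set S := ∑ j, w j * (x j - μ) ^ 2
  have hS : 0 ≤ S := Finset.sum_nonneg fun j _ => mul_nonneg (hw j) (sq_nonneg _)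
  have hS' : a * S ≤ ∑ j, w' j * (x j - μ) ^ 2 := by
    rw [Finset.mul_sum]
    exact Finset.sum_le_sum fun j _ => by
      rw [← mul_assoc]; exact mul_le_mul_of_nonneg_right (hlow j) (sq_nonneg _)
  calc a / b * weightedVar w x ≤ a / b * (S / ∑ j, w j) :=
        mul_le_mul_of_nonneg_left (weightedVar_le x hW.ne' μ) (div_nonneg ha.le hb.le)
    _ = a * S / (b * ∑ j, w j) := by field_simp
    _ ≤ (∑ j, w' j * (x j - μ) ^ 2) / (b * ∑ j, w j) := by gcongr
    _ ≤ (∑ j, w' j * (x j - μ) ^ 2) / ∑ j, w' j := by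
        gcongr
        exact Finset.sum_nonneg fun j _ => mul_nonneg ((mul_nonneg ha.le (hw j)).trans (hlow j))
          (sq_nonneg _)
    _ = weightedVar w' x := (weightedVar_eq x hW'.ne').symm

def expTilt (w x : ι → ℝ) (u : ℝ) (j : ι) : ℝ := w j * exp (u * x j)

theorem exp_mul_weightedVar_le_weightedVar_expTilt {w : ι → ℝ} {x : ι → ℝ} {K : ℝ}
    (hw : 0 ≤ w) (hW : 0 < ∑ j, w j) (hx : ∀ j, |x j| ≤ K) (u : ℝ) :
    exp (-(2 * |u| * K)) * weightedVar w x ≤ weightedVar (expTilt w x u) x := by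
  have habs : ∀ j, |u * x j| ≤ |u| * K := fun j => by
    rw [abs_mul]; exact mul_le_mul_of_nonneg_left (hx j) (abs_nonneg u)
  have hratio : exp (-(2 * |u| * K)) = exp (-(|u| * K)) / exp (|u| * K) := by
    rw [← exp_sub]; ring_nf
  rw [hratio]
  refine div_mul_weightedVar_le x (exp_pos _) hw hW (fun j => ?_) (fun j => ?_)
  · rw [expTilt, mul_comm (exp _)]
    exact mul_le_mul_of_nonneg_left (exp_le_exp.2 (neg_le_of_abs_le (habs j))) (hw j)
  · rw [expTilt, mul_comm (exp _)]
    exact mul_le_mul_of_nonneg_left (exp_le_exp.2 (le_of_abs_le (habs j))) (hw j)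

theorem hasDerivAt_sum_expTilt_mul (w x y : ι → ℝ) (u : ℝ) :
    HasDerivAt (fun v => ∑ j, expTilt w x v j * y j) (∑ j, expTilt w x u j * x j * y j) u := by
  refine HasDerivAt.fun_sum fun j _ => ?_
  refine (((hasDerivAt_mul_const (x := u) (x j)).exp.const_mul (w j)).mul_const (y j)).congr_deriv ?_
  rw [expTilt]
  ring

theorem hasDerivAt_log_sum_expTilt (w x : ι → ℝ) {u : ℝ} (hE : ∑ j, expTilt w x u j ≠ 0) :
    HasDerivAt (fun v => log (∑ j, expTilt w x v j)) (weightedMean (expTilt w x u) x) u := by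
  have h := (hasDerivAt_sum_expTilt_mul w x 1 u).log (by simpa using hE)
  simp only [Pi.one_apply, mul_one] at h
  exact h

theorem hasDerivAt_weightedMean_expTilt (w x : ι → ℝ) {u : ℝ} (hE : ∑ j, expTilt w x u j ≠ 0) :
    HasDerivAt (fun v => weightedMean (expTilt w x v) x) (weightedVar (expTilt w x u) x) u := by
  have h := (hasDerivAt_sum_expTilt_mul w x x u).fun_div (hasDerivAt_sum_expTilt_mul w x 1 u)
    (by simpa using hE)
  simp only [Pi.one_apply, mul_one] at h
  refine h.congr_deriv ?_
  simp only [weightedVar, weightedMean, mul_assoc, ← sq]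
  field_simp

end WeightedMoments

namespace SurvData

variable {n d : ℕ} (D : SurvData n d)

def riskWeights (β : EuclideanSpace ℝ (Fin d)) (i j : Fin n) : ℝ :=
  if D.T i ≤ D.T j then exp ⟪β, D.Z j (D.T i)⟫ else 0

def projCov (δ : EuclideanSpace ℝ (Fin d)) (i j : Fin n) : ℝ := ⟪δ, D.Z j (D.T i)⟫

theorem riskWeights_nonneg (β : EuclideanSpace ℝ (Fin d)) (i : Fin n) : 0 ≤ D.riskWeights β i :=
  fun j => by unfold riskWeights; split_ifs <;> positivity

theorem sum_riskWeights_pos (β : EuclideanSpace ℝ (Fin d)) (i : Fin n) :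
    0 < ∑ j, D.riskWeights β i j :=
  Finset.sum_pos' (fun j _ => D.riskWeights_nonneg β i j)
    ⟨i, Finset.mem_univ i, by simp [riskWeights, exp_pos]⟩

theorem riskWeights_add_smul (β δ : EuclideanSpace ℝ (Fin d)) (u : ℝ) (i : Fin n) :
    D.riskWeights (β + u • δ) i = expTilt (D.riskWeights β i) (D.projCov δ i) u := by
  funext j
  by_cases h : D.T i ≤ D.T j <;>
    simp [riskWeights, expTilt, projCov, h, inner_add_left, real_inner_smul_left, exp_add]

theorem abs_projCov_le {CZ : ℝ} (hT : D.valid) (hZ : D.covBound CZ)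
    (δ : EuclideanSpace ℝ (Fin d)) (i j : Fin n) : |D.projCov δ i j| ≤ CZ * ‖δ‖ :=
  calc |D.projCov δ i j| ≤ ‖δ‖ * ‖D.Z j (D.T i)‖ := abs_real_inner_le_norm _ _
    _ ≤ ‖δ‖ * CZ := mul_le_mul_of_nonneg_left (hZ j _ (hT i)) (norm_nonneg _)
    _ = CZ * ‖δ‖ := mul_comm _ _

theorem S0_eq (β : EuclideanSpace ℝ (Fin d)) (i : Fin n) :
    D.S0 β (D.T i) = (n : ℝ)⁻¹ * ∑ j, D.riskWeights β i j := rfl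

theorem inner_Zbar_eq (β δ : EuclideanSpace ℝ (Fin d)) (i : Fin n) :
    ⟪δ, D.Zbar β (D.T i)⟫ = weightedMean (D.riskWeights β i) (D.projCov δ i) := by
  have hn : (n : ℝ) ≠ 0 := Nat.cast_ne_zero.2 (Fin.pos i).ne'
  have hS1 : ⟪δ, D.S1 β (D.T i)⟫ = (n : ℝ)⁻¹ * ∑ j, D.riskWeights β i j * D.projCov δ i j := by
    rw [S1, real_inner_smul_right, inner_sum]
    congr 1
    refine Finset.sum_congr rfl fun j _ => ?_
    unfold riskWeights projCov
    split_ifs <;> simp [real_inner_smul_right]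
  rw [Zbar, real_inner_smul_right, hS1, weightedMean, S0_eq]
  field_simp

theorem quadForm_Vmat_eq (β δ : EuclideanSpace ℝ (Fin d)) (i : Fin n) :
    δ.ofLp ⬝ᵥ D.Vmat β (D.T i) *ᵥ δ.ofLp =
      weightedVar (D.riskWeights β i) (D.projCov δ i) := by
  have hn : (n : ℝ) ≠ 0 := Nat.cast_ne_zero.2 (Fin.pos i).ne'
  have hrank_one : ∀ v : EuclideanSpace ℝ (Fin d),
      δ.ofLp ⬝ᵥ (of fun k l => v k * v l) *ᵥ δ.ofLp = ⟪δ, v⟫ ^ 2 := fun v => by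
    change δ.ofLp ⬝ᵥ vecMulVec v.ofLp v.ofLp *ᵥ δ.ofLp = _
    rw [vecMulVec_mulVec, dotProduct_smul, op_smul_eq_mul, EuclideanSpace.inner_eq_star_dotProduct,
      star_trivial, dotProduct_comm δ.ofLp, sq]
  have hS2 : δ.ofLp ⬝ᵥ D.S2mat β (D.T i) *ᵥ δ.ofLp =
      (n : ℝ)⁻¹ * ∑ j, D.riskWeights β i j * D.projCov δ i j ^ 2 := by
    rw [S2mat, smul_mulVec, dotProduct_smul, sum_mulVec, dotProduct_sum, smul_eq_mul]
    congr 1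
    refine Finset.sum_congr rfl fun j _ => ?_
    by_cases h : D.T i ≤ D.T j
    · rw [if_pos h, smul_mulVec, dotProduct_smul, hrank_one, smul_eq_mul, riskWeights, if_pos h,
        projCov]
    · simp [riskWeights, h]
  have hW := (D.sum_riskWeights_pos β i).ne'
  rw [Vmat, sub_mulVec, dotProduct_sub, smul_mulVec, dotProduct_smul, hS2, hrank_one,
    inner_Zbar_eq, weightedVar, weightedMean, S0_eq, smul_eq_mul]
  field_simp

theorem inner_score_eq (β δ : EuclideanSpace ℝ (Fin d)) :
    ⟪D.score β, δ⟫ = (n : ℝ)⁻¹ * ∑ i, if D.Δ i then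
      D.projCov δ i i - weightedMean (D.riskWeights β i) (D.projCov δ i) else 0 := by
  rw [score, real_inner_smul_left, sum_inner]
  congr 1
  refine Finset.sum_congr rfl fun i _ => ?_
  split_ifs
  · rw [inner_sub_left, real_inner_comm δ, real_inner_comm δ, inner_Zbar_eq]
    rfl
  · exact inner_zero_left _

theorem quadForm_infoMat_eq (β δ : EuclideanSpace ℝ (Fin d)) :
    δ.ofLp ⬝ᵥ D.infoMat β *ᵥ δ.ofLp = (n : ℝ)⁻¹ * ∑ i, if D.Δ i then
      weightedVar (D.riskWeights β i) (D.projCov δ i) else 0 := by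
  rw [infoMat, smul_mulVec, dotProduct_smul, sum_mulVec, dotProduct_sum, smul_eq_mul]
  congr 1
  refine Finset.sum_congr rfl fun i _ => ?_
  split_ifs
  · exact D.quadForm_Vmat_eq β δ i
  · simp

theorem quadForm_infoMat_nonneg (β δ : EuclideanSpace ℝ (Fin d)) :
    0 ≤ δ.ofLp ⬝ᵥ D.infoMat β *ᵥ δ.ofLp := by
  rw [quadForm_infoMat_eq]
  refine mul_nonneg (by positivity) (Finset.sum_nonneg fun i _ => ?_)
  split_ifs
  · exact weightedVar_nonneg _ (D.riskWeights_nonneg β i)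
  · exact le_rfl

theorem hasDerivAt_loglik_add_smul (β δ : EuclideanSpace ℝ (Fin d)) (u : ℝ) :
    HasDerivAt (fun v => D.loglik (β + v • δ)) ⟪D.score (β + u • δ), δ⟫ u := by
  have hloglik : (fun v => D.loglik (β + v • δ)) = fun v => (n : ℝ)⁻¹ * ∑ i, if D.Δ i then
      ⟪β, D.Z i (D.T i)⟫ + v * D.projCov δ i i -
        log (∑ j, expTilt (D.riskWeights β i) (D.projCov δ i) v j) else 0 := by
    funext v
    simp only [← D.riskWeights_add_smul, projCov, ← real_inner_smul_left, ← inner_add_left]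
    rfl
  rw [hloglik, inner_score_eq]
  refine HasDerivAt.const_mul _ (HasDerivAt.fun_sum fun i _ => ?_)
  by_cases hΔ : D.Δ i
  · simp only [hΔ, if_true, D.riskWeights_add_smul]
    have hE : ∑ j, expTilt (D.riskWeights β i) (D.projCov δ i) u j ≠ 0 := by
      rw [← D.riskWeights_add_smul]; exact (D.sum_riskWeights_pos _ i).ne'
    refine HasDerivAt.sub ?_ (hasDerivAt_log_sum_expTilt _ _ hE)
    simpa using ((hasDerivAt_id u).mul_const (D.projCov δ i i)).const_add ⟪β, D.Z i (D.T i)⟫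
  · simpa [hΔ] using hasDerivAt_const u (0 : ℝ)

theorem hasDerivAt_inner_score_add_smul (β δ : EuclideanSpace ℝ (Fin d)) (u : ℝ) :
    HasDerivAt (fun v => ⟪D.score (β + v • δ), δ⟫)
      (-(δ.ofLp ⬝ᵥ D.infoMat (β + u • δ) *ᵥ δ.ofLp)) u := by
  simp only [inner_score_eq, quadForm_infoMat_eq, D.riskWeights_add_smul]
  have hsum := HasDerivAt.fun_sum (u := Finset.univ) fun i _ =>
    show HasDerivAt (fun v => if D.Δ i then D.projCov δ i i -
        weightedMean (expTilt (D.riskWeights β i) (D.projCov δ i) v) (D.projCov δ i) else 0)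
      (if D.Δ i then -weightedVar (expTilt (D.riskWeights β i) (D.projCov δ i) u)
        (D.projCov δ i) else 0) u by
    by_cases hΔ : D.Δ i
    · have hE : ∑ j, expTilt (D.riskWeights β i) (D.projCov δ i) u j ≠ 0 := by
        rw [← D.riskWeights_add_smul]; exact (D.sum_riskWeights_pos _ i).ne'
      simpa [hΔ] using (hasDerivAt_weightedMean_expTilt _ _ hE).const_sub (D.projCov δ i i)
    · simpa [hΔ] using hasDerivAt_const u (0 : ℝ)
  refine (hsum.const_mul _).congr_deriv ?_
  rw [← mul_neg, ← Finset.sum_neg_distrib]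
  exact congrArg _ (Finset.sum_congr rfl fun i _ => by split_ifs <;> simp)

theorem exp_mul_quadForm_infoMat_le {CZ : ℝ} (hT : D.valid) (hZ : D.covBound CZ)
    (β δ : EuclideanSpace ℝ (Fin d)) (u : ℝ) :
    exp (-(2 * |u| * (CZ * ‖δ‖))) * (δ.ofLp ⬝ᵥ D.infoMat β *ᵥ δ.ofLp) ≤
      δ.ofLp ⬝ᵥ D.infoMat (β + u • δ) *ᵥ δ.ofLp := by
  rw [quadForm_infoMat_eq, quadForm_infoMat_eq, mul_left_comm, Finset.mul_sum]
  refine mul_le_mul_of_nonneg_left (Finset.sum_le_sum fun i _ => ?_) (by positivity)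
  split_ifs
  · rw [D.riskWeights_add_smul]
    exact exp_mul_weightedVar_le_weightedVar_expTilt (D.riskWeights_nonneg β i)
      (D.sum_riskWeights_pos β i) (D.abs_projCov_le hT hZ δ i) u
  · rw [mul_zero]

theorem quadForm_infoMat_div_two_le {CZ : ℝ} (hT : D.valid) (hZ : D.covBound CZ)
    (β δ : EuclideanSpace ℝ (Fin d)) {u : ℝ} (hu : 0 ≤ u) (hlog : 2 * u * (CZ * ‖δ‖) ≤ log 2) :
    (δ.ofLp ⬝ᵥ D.infoMat β *ᵥ δ.ofLp) / 2 ≤ δ.ofLp ⬝ᵥ D.infoMat (β + u • δ) *ᵥ δ.ofLp :=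
  calc (δ.ofLp ⬝ᵥ D.infoMat β *ᵥ δ.ofLp) / 2
      = exp (-log 2) * (δ.ofLp ⬝ᵥ D.infoMat β *ᵥ δ.ofLp) := by
        rw [exp_neg, exp_log two_pos]; ring
    _ ≤ exp (-(2 * |u| * (CZ * ‖δ‖))) * (δ.ofLp ⬝ᵥ D.infoMat β *ᵥ δ.ofLp) := by
        gcongr
        · exact D.quadForm_infoMat_nonneg β δ
        · rwa [abs_of_nonneg hu]
    _ ≤ δ.ofLp ⬝ᵥ D.infoMat (β + u • δ) *ᵥ δ.ofLp := D.exp_mul_quadForm_infoMat_le hT hZ β δ u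

theorem iInf_eigenvalues_mul_le_of_loglik_le {CZ : ℝ} (hCZ : 0 < CZ) (hT : D.valid)
    (hZ : D.covBound CZ) (β₀ δ : EuclideanSpace ℝ (Fin d)) (hH : (D.infoMat β₀).IsHermitian)
    {r : ℝ} (hr : 0 < r) (hrδ : r < ‖δ‖) (hrlog : r < log 2 / (2 * CZ))
    (hle : D.loglik (β₀ + (r / ‖δ‖) • δ) ≤ D.loglik (β₀ + δ)) :
    (⨅ i, hH.eigenvalues i) * r ≤ 2 * ‖D.score β₀‖ := by
  set lam := ⨅ i, hH.eigenvalues i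
  set t := r / ‖δ‖
  have hδ : 0 < ‖δ‖ := hr.trans hrδ
  have ht : t * ‖δ‖ = r := div_mul_cancel₀ r hδ.ne'
  have hnorm : ‖δ‖ ^ 2 = δ.ofLp ⬝ᵥ δ.ofLp := by
    rw [← real_inner_self_eq_norm_sq, EuclideanSpace.inner_eq_star_dotProduct, star_trivial]
  have hcurv : ∀ u ∈ Set.Icc 0 t,
      lam * ‖δ‖ ^ 2 / 2 ≤ δ.ofLp ⬝ᵥ D.infoMat (β₀ + u • δ) *ᵥ δ.ofLp := by
    intro u hu
    have hu_log : 2 * u * (CZ * ‖δ‖) ≤ log 2 := by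
      have : u * ‖δ‖ ≤ r := ht ▸ mul_le_mul_of_nonneg_right hu.2 hδ.le
      nlinarith [(lt_div_iff₀ (by positivity)).1 hrlog]
    calc lam * ‖δ‖ ^ 2 / 2 ≤ (δ.ofLp ⬝ᵥ D.infoMat β₀ *ᵥ δ.ofLp) / 2 := by
          rw [hnorm]
          gcongr
          exact hH.iInf_eigenvalues_mul_dotProduct_self_le δ.ofLp
      _ ≤ δ.ofLp ⬝ᵥ D.infoMat (β₀ + u • δ) *ᵥ δ.ofLp :=
          D.quadForm_infoMat_div_two_le hT hZ β₀ δ hu.1 hu_log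
  have hslope := mul_le_slope_zero_of_concave (D.hasDerivAt_loglik_add_smul β₀ δ)
    (D.hasDerivAt_inner_score_add_smul β₀ δ) (fun u => D.quadForm_infoMat_nonneg _ δ)
    (div_pos hr hδ) ((div_lt_one hδ).2 hrδ) (by rwa [one_smul]) hcurv
  rw [zero_smul, add_zero] at hslope
  have hdrop : lam * r / 2 * ‖δ‖ ≤ ‖D.score β₀‖ * ‖δ‖ :=
    calc lam * r / 2 * ‖δ‖ = lam * ‖δ‖ ^ 2 / 2 * t := by rw [← ht]; ring
      _ ≤ ‖D.score β₀‖ * ‖δ‖ := hslope.trans (real_inner_le_norm _ _)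
  linarith [le_of_mul_le_mul_right hdrop hδ]

end SurvData

theorem cox_mple_localization_general (CZ Cβ : ℝ) {n d : ℕ}
    (D : SurvData n d) (hT : D.valid) (hZ : D.covBound CZ)
    (β₀ βhat : EuclideanSpace ℝ (Fin d))
    (hβ₀ : ‖β₀‖ ≤ Cβ) (hβhat : βhat ∈ Metric.closedBall (0 : EuclideanSpace ℝ (Fin d)) Cβ)
    (hmax : ∀ β ∈ Metric.closedBall (0 : EuclideanSpace ℝ (Fin d)) Cβ,
      D.loglik β ≤ D.loglik βhat)
    (hH : (D.infoMat β₀).IsHermitian)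
    (lam : ℝ) (hlam_def : lam = ⨅ i : Fin d, hH.eigenvalues i)
    (hlam : 0 < lam)
    (hratio : ‖D.score β₀‖ / lam < Real.log 2 / (4 * CZ)) :
    ‖βhat - β₀‖ ≤ 2 * ‖D.score β₀‖ / lam := by
  have hlog2 : 0 < log 2 := log_pos one_lt_two
  have hCZ : 0 < CZ := by
    have h := (div_nonneg (norm_nonneg _) hlam.le).trans_lt hratio
    linarith [(div_pos_iff_of_pos_left hlog2).1 h]
  have hlocal : 2 * ‖D.score β₀‖ / lam < log 2 / (2 * CZ) :=
    calc 2 * ‖D.score β₀‖ / lam = 2 * (‖D.score β₀‖ / lam) := by ring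
      _ < 2 * (log 2 / (4 * CZ)) := by gcongr
      _ = log 2 / (2 * CZ) := by field_simp; ring
  by_contra! hfar
  obtain ⟨r, hr_gt, hr_lt⟩ := exists_between (lt_min hfar hlocal)
  have hr : 0 < r := (div_nonneg (by positivity) hlam.le).trans_lt hr_gt
  have hrδ : r < ‖βhat - β₀‖ := hr_lt.trans_le (min_le_left _ _)
  have hβ₀_mem : β₀ ∈ Metric.closedBall (0 : EuclideanSpace ℝ (Fin d)) Cβ := by simpa using hβ₀
  have hle : D.loglik (β₀ + (r / ‖βhat - β₀‖) • (βhat - β₀)) ≤ D.loglik (β₀ + (βhat - β₀)) := by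
    rw [add_sub_cancel]
    exact hmax _ ((convex_closedBall _ _).add_smul_sub_mem hβ₀_mem hβhat
      ⟨(div_pos hr (hr.trans hrδ)).le, ((div_lt_one (hr.trans hrδ)).2 hrδ).le⟩)
  have hbound := D.iInf_eigenvalues_mul_le_of_loglik_le hCZ hT hZ β₀ (βhat - β₀) hH hr hrδ
    (hr_lt.trans_le (min_le_right _ _)) hle
  rw [← hlam_def] at hbound
  rw [div_lt_iff₀ hlam] at hr_gt
  linarith

/-- Deterministic localization of the constrained maximum partial-likelihood
estimator (key step in the proof of Lemma B.2): if `β̂` maximizes `ℓ(·;D)` over the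
closed ball `B̄(0, C_β)` containing `β₀`, `λ = λ_min(H(β₀;D)) > 0` and
`‖ℓ̇(β₀;D)‖₂/λ < log 2 / (4 C_Z)`, then `‖β̂ − β₀‖₂ ≤ 2‖ℓ̇(β₀;D)‖₂/λ`. -/
theorem cox_mple_localization (CZ Cβ : ℝ) (hCZ : 0 < CZ) (hCβ : 0 < Cβ)
    {n d : ℕ} (hn : 2 ≤ n) (hd : 1 ≤ d)
    (D : SurvData n d) (hT : D.valid) (hZ : D.covBound CZ)
    (β₀ βhat : EuclideanSpace ℝ (Fin d))
    (hβ₀ : ‖β₀‖ ≤ Cβ) (hβhat : βhat ∈ Metric.closedBall (0 : EuclideanSpace ℝ (Fin d)) Cβ)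
    (hmax : ∀ β ∈ Metric.closedBall (0 : EuclideanSpace ℝ (Fin d)) Cβ,
      D.loglik β ≤ D.loglik βhat)
    (hH : (D.infoMat β₀).IsHermitian)
    (lam : ℝ) (hlam_def : lam = ⨅ i : Fin d, hH.eigenvalues i)
    (hlam : 0 < lam)
    (hratio : ‖D.score β₀‖ / lam < Real.log 2 / (4 * CZ)) :
    ‖βhat - β₀‖ ≤ 2 * ‖D.score β₀‖ / lam :=
  cox_mple_localization_general CZ Cβ D hT hZ β₀ βhat hβ₀ hβhat hmax hH lam hlam_def hlam hratio
end
end
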